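/- arXiv:1910.06257 — 10 statements merged into one kernel-verified Lean document; each statement's English description precedes it below -/
import Mathlib

section
/- For every ε > 0, the series ∑_{n=1}^∞ 1/(rad(n) · n^ε) converges, where rad(n) = ∏_{p ∣ n} p is the radical of n (the product of the distinct prime divisors of n, with rad(1) = 1). -/
/-!
The summand `f n = 1 / (rad n * n ^ ε)` is multiplicative, and its Euler factor at a prime `p` is
`1 + p⁻¹ r / (1 - r)` with `r = p ^ (-ε) ≤ 2 ^ (-ε)`, i.e. `1 + O(p ^ (-1-ε))`. Hence every
partial sum is at most `∏ₚ (1 + C p ^ (-1-ε)) ≤ exp (C ∑ₙ n ^ (-1-ε))`, where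
`C = (1 - 2 ^ (-ε))⁻¹`.
-/

/-- The radical of a positive integer: the product of its distinct prime divisors
(with `rad 1 = 1`). -/
def rad (n : ℕ) : ℕ := ∏ p ∈ n.primeFactors, p

open Finset Real

lemma rad_one : rad 1 = 1 := by simp [rad]

lemma one_le_rad (n : ℕ) : 1 ≤ rad n :=
  one_le_prod' fun _ hp => (Nat.prime_of_mem_primeFactors hp).one_le

lemma Nat.Coprime.rad_mul {m n : ℕ} (h : m.Coprime n) : rad (m * n) = rad m * rad n := by
  rcases eq_or_ne m 0 with rfl | hm
  · simp [(Nat.coprime_zero_left n).mp h, rad_one]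
  rcases eq_or_ne n 0 with rfl | hn
  · simp [(Nat.coprime_zero_right m).mp h, rad_one]
  rw [rad, Nat.primeFactors_mul hm hn, prod_union h.disjoint_primeFactors, rad, rad]

lemma rad_prime_pow {p k : ℕ} (hp : p.Prime) (hk : k ≠ 0) : rad (p ^ k) = p := by
  rw [rad, Nat.primeFactors_prime_pow hk hp, prod_singleton]

lemma sum_range_le_tsum_smoothNumbers {f : ℕ → ℝ} (hf : ∀ n, 0 ≤ f n) (hf₀ : f 0 = 0) {N : ℕ}
    (hsum : Summable fun m : N.smoothNumbers => f m) :
    ∑ n ∈ range N, f n ≤ ∑' m : N.smoothNumbers, f m := by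
  have hsmooth : ∑ n ∈ range N with n ∈ N.smoothNumbers, f n = ∑ n ∈ range N, f n := by
    refine sum_filter_of_ne fun n hn hfn => Nat.mem_smoothNumbers_of_lt ?_ (mem_range.mp hn)
    exact Nat.pos_of_ne_zero fun h => hfn (h ▸ hf₀)
  rw [← hsmooth, ← sum_subtype_eq_sum_filter]
  exact hsum.sum_le_tsum _ fun _ _ => hf _

theorem summable_of_tsum_prime_pow_le_one_add {f g : ℕ → ℝ} (hf : ∀ n, 0 ≤ f n) (hf₀ : f 0 = 0)
    (hf₁ : f 1 = 1) (hmul : ∀ {m n}, m.Coprime n → f (m * n) = f m * f n)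
    (hloc : ∀ {p}, p.Prime → Summable fun e => f (p ^ e))
    (hg : Summable g) (hg₀ : ∀ n, 0 ≤ g n) (hle : ∀ {p}, p.Prime → ∑' e, f (p ^ e) ≤ 1 + g p) :
    Summable f := by
  refine summable_of_sum_range_le hf (c := exp (∑' n, g n)) fun N => ?_
  have hnorm : ∀ {p}, p.Prime → Summable fun e => ‖f (p ^ e)‖ := fun hp => by
    simpa only [Real.norm_of_nonneg (hf _)] using hloc hp
  obtain ⟨hsN, hN⟩ :=
    EulerProduct.summable_and_hasSum_smoothNumbers_prod_primesBelow_tsum hf₁ hmul hnorm N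
  calc ∑ n ∈ range N, f n ≤ ∑' m : N.smoothNumbers, f m :=
        sum_range_le_tsum_smoothNumbers hf hf₀ (hsN.congr fun _ => Real.norm_of_nonneg (hf _))
    _ = ∏ p ∈ N.primesBelow, ∑' e, f (p ^ e) := hN.tsum_eq
    _ ≤ ∏ p ∈ N.primesBelow, exp (g p) := by
        refine prod_le_prod (fun _ _ => tsum_nonneg fun _ => hf _) fun p hp => ?_
        linarith [hle (Nat.prime_of_mem_primesBelow hp), add_one_le_exp (g p)]
    _ = exp (∑ p ∈ N.primesBelow, g p) := (exp_sum _ _).symm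
    _ ≤ exp (∑' n, g n) := exp_le_exp.mpr (hg.sum_le_tsum _ fun n _ => hg₀ n)

noncomputable def invRadMulRpow (ε : ℝ) (n : ℕ) : ℝ := 1 / ((rad n : ℝ) * (n : ℝ) ^ ε)

section invRadMulRpow

variable {ε : ℝ}

lemma invRadMulRpow_nonneg (n : ℕ) : 0 ≤ invRadMulRpow ε n := by
  unfold invRadMulRpow; positivity

lemma invRadMulRpow_zero (hε : ε ≠ 0) : invRadMulRpow ε 0 = 0 := by
  simp [invRadMulRpow, zero_rpow hε]

lemma invRadMulRpow_one : invRadMulRpow ε 1 = 1 := by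
  simp [invRadMulRpow, rad_one]

lemma invRadMulRpow_mul {m n : ℕ} (h : m.Coprime n) :
    invRadMulRpow ε (m * n) = invRadMulRpow ε m * invRadMulRpow ε n := by
  simp only [invRadMulRpow, h.rad_mul, Nat.cast_mul,
    mul_rpow (Nat.cast_nonneg m) (Nat.cast_nonneg n)]
  ring

lemma invRadMulRpow_le {n : ℕ} (hn : n ≠ 0) : invRadMulRpow ε n ≤ (n : ℝ) ^ (-ε) := by
  have hpos : 0 < (n : ℝ) ^ ε := rpow_pos_of_pos (by positivity) ε
  rw [invRadMulRpow, rpow_neg (Nat.cast_nonneg n), one_div]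
  exact inv_anti₀ hpos (le_mul_of_one_le_left hpos.le (by exact_mod_cast one_le_rad n))

lemma invRadMulRpow_prime_pow {p k : ℕ} (hp : p.Prime) (hk : k ≠ 0) :
    invRadMulRpow ε (p ^ k) = (p : ℝ)⁻¹ * ((p : ℝ) ^ (-ε)) ^ k := by
  rw [invRadMulRpow, rad_prime_pow hp hk, Nat.cast_pow, ← rpow_pow_comm (Nat.cast_nonneg p),
    rpow_neg (Nat.cast_nonneg p), inv_pow, one_div, mul_inv]

lemma rpow_neg_lt_one_of_prime (hε : 0 < ε) {p : ℕ} (hp : p.Prime) : (p : ℝ) ^ (-ε) < 1 :=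
  rpow_lt_one_of_one_lt_of_neg (by exact_mod_cast hp.one_lt) (neg_neg_iff_pos.mpr hε)

lemma summable_invRadMulRpow_prime_pow (hε : 0 < ε) {p : ℕ} (hp : p.Prime) :
    Summable fun e => invRadMulRpow ε (p ^ e) := by
  refine .of_nonneg_of_le (fun _ => invRadMulRpow_nonneg _) (fun e => ?_)
    (summable_geometric_of_lt_one (rpow_nonneg (Nat.cast_nonneg p) _)
      (rpow_neg_lt_one_of_prime hε hp))
  rw [rpow_pow_comm (Nat.cast_nonneg p), ← Nat.cast_pow]
  exact invRadMulRpow_le (pow_ne_zero e hp.ne_zero)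

lemma tsum_invRadMulRpow_prime_pow_le (hε : 0 < ε) {p : ℕ} (hp : p.Prime) :
    ∑' e, invRadMulRpow ε (p ^ e) ≤ 1 + (1 - (2 : ℝ) ^ (-ε))⁻¹ * ((p : ℝ) ^ (1 + ε))⁻¹ := by
  set r := (p : ℝ) ^ (-ε)
  have hp₀ : (0 : ℝ) ≤ p := Nat.cast_nonneg p
  have hr₀ : 0 ≤ r := rpow_nonneg hp₀ _
  have hr₁ : r < 1 := rpow_neg_lt_one_of_prime hε hp
  have hr₂ : r ≤ (2 : ℝ) ^ (-ε) :=
    rpow_le_rpow_of_nonpos zero_lt_two (by exact_mod_cast hp.two_le) (neg_nonpos.mpr hε.le)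
  have hfactor : ∑' e, invRadMulRpow ε (p ^ (e + 1)) = ((p : ℝ) ^ (1 + ε))⁻¹ * (1 - r)⁻¹ := by
    simp_rw [invRadMulRpow_prime_pow hp (Nat.succ_ne_zero _), pow_succ', ← mul_assoc]
    rw [tsum_mul_left, tsum_geometric_of_lt_one hr₀ hr₁, rpow_add' hp₀ (by linarith), rpow_one,
      mul_inv, ← rpow_neg hp₀]
  rw [(summable_invRadMulRpow_prime_pow hε hp).tsum_eq_zero_add, pow_zero, invRadMulRpow_one,
    hfactor, mul_comm]
  gcongr
  linarith [rpow_lt_one_of_one_lt_of_neg one_lt_two (neg_neg_iff_pos.mpr hε)]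

theorem summable_invRadMulRpow (hε : 0 < ε) : Summable (invRadMulRpow ε) := by
  have hC : 0 ≤ (1 - (2 : ℝ) ^ (-ε))⁻¹ :=
    inv_nonneg.mpr (sub_nonneg.mpr (rpow_le_one_of_one_le_of_nonpos one_le_two (by linarith)))
  exact summable_of_tsum_prime_pow_le_one_add invRadMulRpow_nonneg (invRadMulRpow_zero hε.ne')
    invRadMulRpow_one invRadMulRpow_mul (summable_invRadMulRpow_prime_pow hε)
    ((summable_nat_rpow_inv.mpr (by linarith)).mul_left _) (fun _ => by positivity)
    (tsum_invRadMulRpow_prime_pow_le hε)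

end invRadMulRpow

/-- For every `ε > 0`, the series `∑_{n=1}^∞ 1/(rad(n) · n^ε)` converges. -/
theorem stmt_4 (ε : ℝ) (hε : 0 < ε) :
    Summable (fun n : ℕ => 1 / ((rad (n + 1) : ℝ) * ((n + 1 : ℕ) : ℝ) ^ ε)) :=
  (summable_nat_add_iff 1).mpr (summable_invRadMulRpow hε)
end

section
/- Let a₁, a₂ > 0 be real numbers with a₁ + a₂ > 1. Then the sum ∑ 1/(n₁^{a₁} · n₂^{a₂}), taken over all pairs of positive integers (n₁, n₂) with rad(n₁) = rad(n₂), converges (i.e. the family indexed by such pairs is summable). -/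
/-!
Write `n₁ = d m₁` and `n₂ = d m₂` with `d = rad n₁ = rad n₂`; then `m₁, m₂` only have prime
factors dividing `d`. By the Euler product, the sum of `m ^ (-a)` over such `m` is
`∏_{p ∣ d} (1 - p ^ (-a))⁻¹`, and since the factors tend to `1` this is `O(d ^ δ)` for every
`δ > 0`. Hence the double sum is at most a constant times `∑_d d ^ (2δ - a₁ - a₂)`, which
converges once `2δ < a₁ + a₂ - 1`.
-/

open Nat Filter Topology Finset

theorem Finset.exists_prod_le_of_eventually_le_one {ι R : Type*} [CommMonoidWithZero R]
    [LinearOrder R] [ZeroLEOneClass R] [PosMulMono R] {c : ι → R}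
    (hc : ∀ᶠ i in cofinite, c i ≤ 1) :
    ∃ K, ∀ s : Finset ι, (∀ i ∈ s, 0 ≤ c i) → ∏ i ∈ s, c i ≤ K := by
  classical
  have hbig : {i | ¬c i ≤ 1}.Finite := eventually_cofinite.mp hc
  refine ⟨∏ i ∈ hbig.toFinset, c i, fun s hs => ?_⟩
  calc ∏ i ∈ s, c i = (∏ i ∈ s with ¬c i ≤ 1, c i) * ∏ i ∈ s with c i ≤ 1, c i := by
        rw [mul_comm, prod_filter_mul_prod_filter_not]
    _ ≤ ∏ i ∈ s with ¬c i ≤ 1, c i :=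
        mul_le_of_le_one_right (prod_nonneg fun i hi => hs i (mem_filter.mp hi).1)
          (prod_le_one (fun i hi => hs i (mem_filter.mp hi).1) fun i hi => (mem_filter.mp hi).2)
    _ ≤ ∏ i ∈ hbig.toFinset, c i :=
        prod_le_prod_of_subset_of_one_le (fun i hi => by simpa using (mem_filter.mp hi).2)
          (fun i hi => hs i (mem_filter.mp hi).1)
          fun i hi _ => (not_le.mp (by simpa using hi)).le

section SmoothSums

variable {a : ℝ}

lemma natCast_rpow_neg_lt_one {n : ℕ} (hn : 1 < n) (ha : 0 < a) : (n : ℝ) ^ (-a) < 1 :=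
  Real.rpow_lt_one_of_one_lt_of_neg (by exact_mod_cast hn) (neg_neg_of_pos ha)

lemma hasSum_rpow_neg_factoredNumbers (ha : 0 < a) (s : Finset ℕ) :
    HasSum (fun m : factoredNumbers s => ((m : ℕ) : ℝ) ^ (-a))
      (∏ p ∈ s with p.Prime, (1 - (p : ℝ) ^ (-a))⁻¹) := by
  let f : ℕ →* ℝ := NNReal.toRealHom.toMonoidHom.comp
    ((NNReal.rpowMonoidHom (-a)).comp (Nat.castRingHom NNReal).toMonoidHom)
  have hf (n : ℕ) : f n = (n : ℝ) ^ (-a) := by simp [f]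
  simpa only [hf] using
    (EulerProduct.summable_and_hasSum_factoredNumbers_prod_filter_prime_geometric (f := f)
      (fun hp => by
        rw [hf, Real.norm_of_nonneg (by positivity)]
        exact natCast_rpow_neg_lt_one hp.one_lt ha) s).2

lemma exists_tsum_rpow_neg_factoredNumbers_primeFactors_le (ha : 0 < a) {δ : ℝ} (hδ : 0 < δ) :
    ∃ K, 0 ≤ K ∧ ∀ d : ℕ, d ≠ 0 →
      ∑' m : factoredNumbers d.primeFactors, ((m : ℕ) : ℝ) ^ (-a) ≤ K * (d : ℝ) ^ δ := by
  let c : ℕ → ℝ := fun p => (1 - (p : ℝ) ^ (-a))⁻¹ * (p : ℝ) ^ (-δ)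
  have hc : Tendsto c atTop (𝓝 0) := by
    have hpow {b : ℝ} (hb : 0 < b) : Tendsto (fun n : ℕ => (n : ℝ) ^ (-b)) atTop (𝓝 0) :=
      (tendsto_rpow_neg_atTop hb).comp tendsto_natCast_atTop_atTop
    simpa using ((tendsto_const_nhds.sub (hpow ha)).inv₀ (by norm_num)).mul (hpow hδ)
  obtain ⟨K, hK⟩ := exists_prod_le_of_eventually_le_one (c := c)
    (Nat.cofinite_eq_atTop ▸ hc.eventually_le_const zero_lt_one)
  have hK0 : 0 ≤ K := zero_le_one.trans (by simpa using hK ∅ (by simp))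
  refine ⟨K, hK0, fun d hd => ?_⟩
  have hprimes : ∀ p ∈ d.primeFactors, p.Prime := fun p hp => prime_of_mem_primeFactors hp
  rw [(hasSum_rpow_neg_factoredNumbers ha _).tsum_eq, filter_true_of_mem hprimes]
  have hrad : ∏ p ∈ d.primeFactors, (p : ℝ) ^ δ ≤ (d : ℝ) ^ δ := by
    rw [Real.finsetProd_rpow _ _ (fun p _ => by positivity), ← Nat.cast_prod]
    gcongr
    exact_mod_cast Nat.le_of_dvd (Nat.pos_of_ne_zero hd) (prod_primeFactors_dvd d)
  calc ∏ p ∈ d.primeFactors, (1 - (p : ℝ) ^ (-a))⁻¹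
      = (∏ p ∈ d.primeFactors, c p) * ∏ p ∈ d.primeFactors, (p : ℝ) ^ δ := by
        rw [← prod_mul_distrib]
        refine prod_congr rfl fun p hp => ?_
        have hp0 : (0 : ℝ) < p := by exact_mod_cast (hprimes p hp).pos
        rw [mul_assoc, ← Real.rpow_add hp0, neg_add_cancel, Real.rpow_zero, mul_one]
    _ ≤ K * (d : ℝ) ^ δ := by
        refine mul_le_mul (hK _ fun p hp => ?_) hrad (by positivity) hK0
        have hp1 := natCast_rpow_neg_lt_one (hprimes p hp).one_lt ha
        exact mul_nonneg (inv_nonneg.mpr (by linarith)) (by positivity)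

end SmoothSums

lemma summable_sigma_factoredNumbers_primeFactors {a₁ a₂ : ℝ} (h₁ : 0 < a₁) (h₂ : 0 < a₂)
    (h : 1 < a₁ + a₂) :
    Summable (fun z : Σ d : ℕ, factoredNumbers d.primeFactors × factoredNumbers d.primeFactors =>
      ((z.1 * z.2.1 : ℕ) : ℝ) ^ (-a₁) * ((z.1 * z.2.2 : ℕ) : ℝ) ^ (-a₂)) := by
  obtain ⟨δ, hδ, hδa⟩ : ∃ δ : ℝ, 0 < δ ∧ 2 * δ < a₁ + a₂ - 1 :=
    ⟨(a₁ + a₂ - 1) / 4, by linarith, by linarith⟩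
  obtain ⟨K₁, hK₁, hS₁⟩ := exists_tsum_rpow_neg_factoredNumbers_primeFactors_le h₁ hδ
  obtain ⟨K₂, hK₂, hS₂⟩ := exists_tsum_rpow_neg_factoredNumbers_primeFactors_le h₂ hδ
  have hsplit (d : ℕ) (y : factoredNumbers d.primeFactors × factoredNumbers d.primeFactors) :
      ((d * y.1 : ℕ) : ℝ) ^ (-a₁) * ((d * y.2 : ℕ) : ℝ) ^ (-a₂) =
        ((d : ℝ) ^ (-a₁) * (d : ℝ) ^ (-a₂)) *
          (((y.1 : ℕ) : ℝ) ^ (-a₁) * ((y.2 : ℕ) : ℝ) ^ (-a₂)) := by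
    push_cast
    rw [Real.mul_rpow (by positivity) (by positivity),
      Real.mul_rpow (by positivity) (by positivity)]
    ring
  have hsum {a : ℝ} (ha : 0 < a) (d : ℕ) :
      Summable (fun m : factoredNumbers d.primeFactors => ((m : ℕ) : ℝ) ^ (-a)) :=
    (hasSum_rpow_neg_factoredNumbers ha _).summable
  have hsumProd (d : ℕ) : Summable (fun y : factoredNumbers d.primeFactors ×
      factoredNumbers d.primeFactors => ((y.1 : ℕ) : ℝ) ^ (-a₁) * ((y.2 : ℕ) : ℝ) ^ (-a₂)) :=
    (hsum h₁ d).mul_of_nonneg (hsum h₂ d) (fun _ => by positivity) (fun _ => by positivity)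
  refine (summable_sigma_of_nonneg fun z => by positivity).mpr ⟨fun d => ?_, ?_⟩
  · simp_rw [hsplit]
    exact (hsumProd d).mul_left _
  refine Summable.of_norm_bounded_eventually
    ((Real.summable_nat_rpow.mpr (by linarith : (δ - a₁) + (δ - a₂) < -1)).mul_left (K₁ * K₂))
    ?_
  filter_upwards [eventually_cofinite_ne 0] with d hd
  have hd0 : (0 : ℝ) < d := by exact_mod_cast Nat.pos_of_ne_zero hd
  rw [Real.norm_of_nonneg (tsum_nonneg fun _ => by positivity)]
  simp_rw [hsplit]
  rw [tsum_mul_left, ← (hsum h₁ d).tsum_mul_tsum (hsum h₂ d) (hsumProd d)]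
  calc ((d : ℝ) ^ (-a₁) * (d : ℝ) ^ (-a₂)) *
        ((∑' m : factoredNumbers d.primeFactors, ((m : ℕ) : ℝ) ^ (-a₁)) *
          ∑' m : factoredNumbers d.primeFactors, ((m : ℕ) : ℝ) ^ (-a₂))
      ≤ ((d : ℝ) ^ (-a₁) * (d : ℝ) ^ (-a₂)) * ((K₁ * (d : ℝ) ^ δ) * (K₂ * (d : ℝ) ^ δ)) := by
        gcongr
        exacts [hS₁ d hd, hS₂ d hd]
    _ = K₁ * K₂ * (d : ℝ) ^ ((δ - a₁) + (δ - a₂)) := by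
        rw [Real.rpow_add hd0, sub_eq_add_neg, sub_eq_add_neg, Real.rpow_add hd0,
          Real.rpow_add hd0]
        ring

lemma rad_dvd (n : ℕ) : rad n ∣ n := prod_primeFactors_dvd n

lemma rad_ne_zero {n : ℕ} (hn : n ≠ 0) : rad n ≠ 0 :=
  fun h => hn (zero_dvd_iff.mp (h ▸ rad_dvd n))

lemma primeFactors_rad (n : ℕ) : (rad n).primeFactors = n.primeFactors :=
  primeFactors_prod fun _ hp => prime_of_mem_primeFactors hp

lemma div_rad_mem_factoredNumbers {n : ℕ} (hn : n ≠ 0) :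
    n / rad n ∈ factoredNumbers (rad n).primeFactors := by
  rw [mem_factoredNumbers_iff_primeFactors_subset, primeFactors_rad]
  exact ⟨(Nat.div_pos (Nat.le_of_dvd (Nat.pos_of_ne_zero hn) (rad_dvd n))
      (Nat.pos_of_ne_zero (rad_ne_zero hn))).ne',
    primeFactors_mono (Nat.div_dvd_of_dvd (rad_dvd n)) hn⟩

def radDecomposition (x : {q : ℕ × ℕ // 0 < q.1 ∧ 0 < q.2 ∧ rad q.1 = rad q.2}) :
    Σ d : ℕ, factoredNumbers d.primeFactors × factoredNumbers d.primeFactors :=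
  ⟨rad x.1.1, ⟨x.1.1 / rad x.1.1, div_rad_mem_factoredNumbers x.2.1.ne'⟩,
    ⟨x.1.2 / rad x.1.1, x.2.2.2 ▸ div_rad_mem_factoredNumbers x.2.2.1.ne'⟩⟩

lemma radDecomposition_mul (x : {q : ℕ × ℕ // 0 < q.1 ∧ 0 < q.2 ∧ rad q.1 = rad q.2}) :
    ((radDecomposition x).1 * (radDecomposition x).2.1,
      (radDecomposition x).1 * (radDecomposition x).2.2) = x.1 := by
  have h₂ : rad x.1.1 * (x.1.2 / rad x.1.1) = x.1.2 := x.2.2.2 ▸ Nat.mul_div_cancel' (rad_dvd _)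
  exact Prod.ext (Nat.mul_div_cancel' (rad_dvd _)) h₂

lemma radDecomposition_injective : Function.Injective radDecomposition := fun x y hxy =>
  Subtype.ext ((radDecomposition_mul x).symm.trans (hxy ▸ radDecomposition_mul y))

/-- If `a₁, a₂ > 0` and `a₁ + a₂ > 1`, then the family
`1/(n₁^{a₁} n₂^{a₂})`, indexed by pairs of positive integers with
`rad n₁ = rad n₂`, is summable. -/
theorem stmt_5 (a₁ a₂ : ℝ) (h₁ : 0 < a₁) (h₂ : 0 < a₂) (h : 1 < a₁ + a₂) :
    Summable (fun x : {q : ℕ × ℕ // 0 < q.1 ∧ 0 < q.2 ∧ rad q.1 = rad q.2} =>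
      1 / ((x.val.1 : ℝ) ^ a₁ * (x.val.2 : ℝ) ^ a₂)) := by
  refine ((summable_sigma_factoredNumbers_primeFactors h₁ h₂ h).comp_injective
    radDecomposition_injective).congr fun x => ?_
  have hx := radDecomposition_mul x
  simp only [Prod.ext_iff] at hx
  simp only [Function.comp_apply, hx.1, hx.2, Real.rpow_neg (Nat.cast_nonneg _), one_div, mul_inv]
end

section
/- Let k be a field of characteristic not equal to 3, and let L = k(μ₃) be the field obtained by adjoining a primitive cube root of unity to k (so L = k if μ₃ ⊂ k, and [L:k] = 2 otherwise). Let α ∈ L with α ∉ {0, 1, −1}, and if μ₃ ⊄ k assume that Norm_{L/k}(α) = 1. Then α + α⁻¹ lies in (the image of) k, and there is an isomorphism of L-algebras L[u]/(u³ − α) ≅ (k[t]/(t³ − 3t − (α + α⁻¹))) ⊗_k L. Explicitly, the maps u ↦ (−α/(α² − 1))·(t² − αt − 2) and t ↦ u + u⁻¹ are mutually inverse L-algebra isomorphisms between L[u]/(u³ − α) and L[t]/(t³ − 3t − α − α⁻¹). -/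
/-!
Put `t = u + u⁻¹ = u + α⁻¹u²` where `u³ = α`; then `t³ = 3t + α + α⁻¹`. Conversely `u` is
recovered from `t`: from `u² − tu + 1 = 0` and `u³ = α` one gets `(t² − 1)u = t + α`, and modulo
`t³ − 3t − α − α⁻¹` the inverse of `t² − 1` turns this into `u = −α(t² − αt − 2)/(α² − 1)`.
These identities hold in every commutative ring in which `α` and `α² − 1` are invertible, which
gives the two mutually inverse maps.

That `α + α⁻¹` lies in `k`: if `μ₃ ⊂ k` then `ζ ∈ k` and `L = k`. Otherwise `[L : k] = 2`, so
Cayley–Hamilton reads `α² − Tr(α)α + N(α) = 0`, and `N(α) = 1` gives `α + α⁻¹ = Tr(α)`.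
-/

open Polynomial

theorem sq_add_self_add_one_eq_zero {R : Type*} [CommRing R] [IsDomain R] {x : R}
    (h3 : x ^ 3 = 1) (h1 : x ≠ 1) : x ^ 2 + x + 1 = 0 := by
  have : (x - 1) * (x ^ 2 + x + 1) = 0 := by linear_combination h3
  exact (mul_eq_zero.mp this).resolve_left (sub_ne_zero.mpr h1)

theorem mem_range_algebraMap_of_sq_add_self_add_one {k L : Type*} [CommRing k] [CommRing L]
    [IsDomain L] [Algebra k L] {ω : k} (hω : ω ^ 2 + ω + 1 = 0) {ζ : L} (hζ : ζ ^ 2 + ζ + 1 = 0) :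
    ζ ∈ Set.range (algebraMap k L) := by
  have hω' : algebraMap k L ω ^ 2 + algebraMap k L ω + 1 = 0 := by
    simpa using congrArg (algebraMap k L) hω
  have : (ζ - algebraMap k L ω) * (ζ - algebraMap k L ω ^ 2) = 0 := by
    linear_combination hζ + (algebraMap k L ω - ζ - 1) * hω'
  rcases mul_eq_zero.mp this with h | h
  · exact ⟨ω, (sub_eq_zero.mp h).symm⟩
  · exact ⟨ω ^ 2, by rw [map_pow, sub_eq_zero.mp h]⟩

theorem Algebra.sq_sub_trace_mul_add_norm {k L : Type*} [Field k] [CommRing L] [Algebra k L]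
    (h : Module.finrank k L = 2) (x : L) :
    x ^ 2 - algebraMap k L (Algebra.trace k L x) * x + algebraMap k L (Algebra.norm k x) = 0 := by
  have : Module.Finite k L := Module.finite_of_finrank_eq_succ h
  let b := Module.finBasisOfFinrankEq k L h
  have hM : aeval (Algebra.leftMulMatrix b x) (Algebra.leftMulMatrix b x).charpoly = 0 :=
    Matrix.aeval_self_charpoly _
  rw [Matrix.charpoly_fin_two, ← Algebra.trace_eq_matrix_trace, ← Algebra.norm_eq_matrix_det,
    aeval_algHom_apply] at hM
  simpa [Algebra.smul_def] using Algebra.leftMulMatrix_injective b (hM.trans (map_zero _).symm)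

theorem Algebra.add_inv_eq_algebraMap_trace {k L : Type*} [Field k] [Field L] [Algebra k L]
    (h : Module.finrank k L = 2) {x : L} (hx : Algebra.norm k x = 1) :
    x + x⁻¹ = algebraMap k L (Algebra.trace k L x) := by
  have : Module.Finite k L := Module.finite_of_finrank_eq_succ h
  have hx0 : x ≠ 0 := by rintro rfl; simp at hx
  have hcay := Algebra.sq_sub_trace_mul_add_norm h x
  rw [hx, map_one] at hcay
  field_simp
  linear_combination hcay

theorem finrank_eq_two_of_adjoin_eq_top {k L : Type*} [Field k] [Field L] [Algebra k L] {ζ : L}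
    (hgen : Algebra.adjoin k {ζ} = ⊤) (hζ : ζ ^ 2 + ζ + 1 = 0)
    (hζk : ζ ∉ Set.range (algebraMap k L)) : Module.finrank k L = 2 := by
  have hp : (X ^ 2 + X + 1 : k[X]).Monic := by monicity!
  have hpζ : aeval ζ (X ^ 2 + X + 1 : k[X]) = 0 := by simpa using hζ
  have hint : IsIntegral k ζ := ⟨_, hp, by rwa [← aeval_def]⟩
  rw [(PowerBasis.ofAdjoinEqTop hint hgen).finrank, PowerBasis.ofAdjoinEqTop_dim]
  have hle : (minpoly k ζ).natDegree ≤ 2 :=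
    (natDegree_le_of_dvd (minpoly.dvd k ζ hpζ) hp.ne_zero).trans (by compute_degree!)
  have hne : (minpoly k ζ).natDegree ≠ 1 := fun h1 => hζk (minpoly.natDegree_eq_one_iff.mp h1)
  have hpos := minpoly.natDegree_pos hint
  omega

theorem exists_algebraMap_eq_add_inv {k L : Type*} [Field k] [Field L] [Algebra k L] {ζ : L}
    (hgen : Algebra.adjoin k {ζ} = ⊤) (hζ : ζ ^ 2 + ζ + 1 = 0) {α : L}
    (hnorm : (¬ ∃ ω : k, ω ^ 3 = 1 ∧ ω ≠ 1) → Algebra.norm k α = 1) :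
    ∃ a : k, algebraMap k L a = α + α⁻¹ := by
  by_cases hζk : ζ ∈ Set.range (algebraMap k L)
  · have hbot : (⊤ : Subalgebra k L) ≤ ⊥ := by
      rw [← hgen]
      exact Algebra.adjoin_le (Set.singleton_subset_iff.mpr (Algebra.mem_bot.mpr hζk))
    obtain ⟨a, rfl⟩ := Algebra.mem_bot.mp (hbot (Algebra.mem_top (x := α)))
    exact ⟨a + a⁻¹, by rw [map_add, map_inv₀]⟩
  · refine ⟨_, (Algebra.add_inv_eq_algebraMap_trace
      (finrank_eq_two_of_adjoin_eq_top hgen hζ hζk) (hnorm ?_)).symm⟩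
    rintro ⟨ω, hω3, hω1⟩
    exact hζk (mem_range_algebraMap_of_sq_add_self_add_one (sq_add_self_add_one_eq_zero hω3 hω1) hζ)

noncomputable def AdjoinRoot.tensorAlgEquivMap {k L : Type*} [CommRing k] [CommRing L]
    [Algebra k L] (p : k[X]) :
    TensorProduct k L (AdjoinRoot p) ≃ₐ[L] AdjoinRoot (p.map (algebraMap k L)) :=
  (AdjoinRoot.tensorAlgEquiv p _ rfl).trans
    (AdjoinRoot.mapAlgEquiv (Algebra.TensorProduct.rid k L L) _ _ (by
      rw [Polynomial.map_map]
      convert Associated.refl _ using 2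
      ext; simp [Algebra.algebraMap_eq_smul_one]))

section CubicSubstitutions

variable {S : Type*} [CommRing S] {a b c : S}

def cubeRootOfTrace (a c t : S) : S := c * (t ^ 2 - a * t - 2)

def traceOfCubeRoot (b u : S) : S := u + b * u ^ 2

theorem traceOfCubeRoot_pow_three (hab : a * b = 1) {u : S} (hu : u ^ 3 = a) :
    traceOfCubeRoot b u ^ 3 = 3 * traceOfCubeRoot b u + (a + b) := by
  unfold traceOfCubeRoot; grind

theorem cubeRootOfTrace_pow_three (hab : a * b = 1) (hc : c * (a ^ 2 - 1) = -a) {t : S}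
    (ht : t ^ 3 = 3 * t + (a + b)) : cubeRootOfTrace a c t ^ 3 = a := by
  unfold cubeRootOfTrace; grind

theorem traceOfCubeRoot_cubeRootOfTrace (hab : a * b = 1) (hc : c * (a ^ 2 - 1) = -a) {t : S}
    (ht : t ^ 3 = 3 * t + (a + b)) : traceOfCubeRoot b (cubeRootOfTrace a c t) = t := by
  unfold cubeRootOfTrace traceOfCubeRoot; grind

theorem cubeRootOfTrace_traceOfCubeRoot (hab : a * b = 1) (hc : c * (a ^ 2 - 1) = -a) {u : S}
    (hu : u ^ 3 = a) : cubeRootOfTrace a c (traceOfCubeRoot b u) = u := by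
  unfold cubeRootOfTrace traceOfCubeRoot; grind

theorem map_cubeRootOfTrace {T F : Type*} [CommRing T] [FunLike F S T] [RingHomClass F S T] (f : F)
    (t : S) : f (cubeRootOfTrace a c t) = cubeRootOfTrace (f a) (f c) (f t) := by
  simp [cubeRootOfTrace, map_ofNat]

theorem map_traceOfCubeRoot {T F : Type*} [CommRing T] [FunLike F S T] [RingHomClass F S T] (f : F)
    (u : S) : f (traceOfCubeRoot b u) = traceOfCubeRoot (f b) (f u) := by
  simp [traceOfCubeRoot]

end CubicSubstitutions

namespace AdjoinRoot

variable {R : Type*} [CommRing R]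

theorem root_X_pow_three_sub_C_pow_three (r : R) :
    root (X ^ 3 - C r) ^ 3 = algebraMap R (AdjoinRoot (X ^ 3 - C r)) r := by
  have := eval₂_root (X ^ 3 - C r)
  simp only [eval₂_sub, eval₂_X_pow, eval₂_C] at this
  rw [algebraMap_eq]
  linear_combination this

theorem root_X_pow_three_sub_three_mul_X_sub_C_pow_three (s : R) :
    root (X ^ 3 - C 3 * X - C s) ^ 3 =
      3 * root (X ^ 3 - C 3 * X - C s) + algebraMap R (AdjoinRoot (X ^ 3 - C 3 * X - C s)) s := by
  have := eval₂_root (X ^ 3 - C 3 * X - C s)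
  simp only [eval₂_sub, eval₂_mul, eval₂_X_pow, eval₂_X, eval₂_C] at this
  rw [map_ofNat (of _)] at this
  rw [algebraMap_eq]
  linear_combination this

end AdjoinRoot

section CubeRootTraceEquiv

open AdjoinRoot

variable {L : Type*} [Field L] {α : L}

theorem algebraMap_mul_algebraMap_inv (S : Type*) [Semiring S] [Algebra L S] (h0 : α ≠ 0) :
    algebraMap L S α * algebraMap L S α⁻¹ = 1 := by
  rw [← map_mul, mul_inv_cancel₀ h0, map_one]

theorem algebraMap_div_mul_sq_sub_one (S : Type*) [Ring S] [Algebra L S] (hα : α ^ 2 ≠ 1) :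
    algebraMap L S (-α / (α ^ 2 - 1)) * (algebraMap L S α ^ 2 - 1) = -algebraMap L S α := by
  rw [← map_pow, ← map_one (algebraMap L S), ← map_sub, ← map_mul,
    div_mul_cancel₀ _ (sub_ne_zero.mpr hα), map_neg]

theorem root_trace_cubic_pow_three (α : L) :
    root (X ^ 3 - C 3 * X - C (α + α⁻¹)) ^ 3 = 3 * root (X ^ 3 - C 3 * X - C (α + α⁻¹)) +
      (algebraMap L (AdjoinRoot (X ^ 3 - C 3 * X - C (α + α⁻¹))) α +
        algebraMap L (AdjoinRoot (X ^ 3 - C 3 * X - C (α + α⁻¹))) α⁻¹) := by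
  rw [← map_add]
  exact root_X_pow_three_sub_three_mul_X_sub_C_pow_three _

noncomputable def cubeToTrace (h0 : α ≠ 0) (hα : α ^ 2 ≠ 1) :
    AdjoinRoot (X ^ 3 - C α) →ₐ[L] AdjoinRoot (X ^ 3 - C 3 * X - C (α + α⁻¹)) :=
  liftAlgHom _ (Algebra.ofId _ _)
    (cubeRootOfTrace (algebraMap L _ α) (algebraMap L _ (-α / (α ^ 2 - 1))) (root _)) <| by
    rw [Algebra.toRingHom_ofId, ← aeval_def]
    simp only [map_sub, map_pow, aeval_X, aeval_C, sub_eq_zero]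
    exact cubeRootOfTrace_pow_three (algebraMap_mul_algebraMap_inv _ h0)
      (algebraMap_div_mul_sq_sub_one _ hα) (root_trace_cubic_pow_three α)

noncomputable def traceToCube (h0 : α ≠ 0) :
    AdjoinRoot (X ^ 3 - C 3 * X - C (α + α⁻¹)) →ₐ[L] AdjoinRoot (X ^ 3 - C α) :=
  liftAlgHom _ (Algebra.ofId _ _) (traceOfCubeRoot (algebraMap L _ α⁻¹) (root _)) <| by
    have := traceOfCubeRoot_pow_three (algebraMap_mul_algebraMap_inv _ h0)
      (root_X_pow_three_sub_C_pow_three α)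
    rw [Algebra.toRingHom_ofId, ← aeval_def]
    simp only [map_sub, map_mul, map_pow, aeval_X, aeval_C, map_ofNat, map_add]
    linear_combination this

theorem cubeToTrace_root (h0 : α ≠ 0) (hα : α ^ 2 ≠ 1) :
    cubeToTrace h0 hα (root _) =
      cubeRootOfTrace (algebraMap L _ α) (algebraMap L _ (-α / (α ^ 2 - 1))) (root _) :=
  liftAlgHom_root ..

theorem traceToCube_root (h0 : α ≠ 0) :
    traceToCube h0 (root _) = traceOfCubeRoot (algebraMap L _ α⁻¹) (root (X ^ 3 - C α)) :=
  liftAlgHom_root ..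

theorem cubeToTrace_comp_traceToCube (h0 : α ≠ 0) (hα : α ^ 2 ≠ 1) :
    (cubeToTrace h0 hα).comp (traceToCube h0) = AlgHom.id L _ := by
  ext
  rw [AlgHom.comp_apply, traceToCube_root, map_traceOfCubeRoot, AlgHom.commutes, cubeToTrace_root,
    AlgHom.id_apply]
  exact traceOfCubeRoot_cubeRootOfTrace (algebraMap_mul_algebraMap_inv _ h0)
    (algebraMap_div_mul_sq_sub_one _ hα) (root_trace_cubic_pow_three α)

theorem traceToCube_comp_cubeToTrace (h0 : α ≠ 0) (hα : α ^ 2 ≠ 1) :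
    (traceToCube h0).comp (cubeToTrace h0 hα) = AlgHom.id L _ := by
  ext
  rw [AlgHom.comp_apply, cubeToTrace_root, map_cubeRootOfTrace, AlgHom.commutes, AlgHom.commutes,
    traceToCube_root, AlgHom.id_apply]
  exact cubeRootOfTrace_traceOfCubeRoot (algebraMap_mul_algebraMap_inv _ h0)
    (algebraMap_div_mul_sq_sub_one _ hα) (root_X_pow_three_sub_C_pow_three α)

end CubeRootTraceEquiv

theorem stmt_7_general (k L : Type*) [Field k] [Field L] [Algebra k L]
    (ζ : L) (hζ3 : ζ ^ 3 = 1) (hζ1 : ζ ≠ 1)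
    (hgen : Algebra.adjoin k ({ζ} : Set L) = ⊤)
    (α : L) (h0 : α ≠ 0) (h1 : α ≠ 1) (hm1 : α ≠ -1)
    (hnorm : (¬ ∃ ω : k, ω ^ 3 = 1 ∧ ω ≠ 1) → Algebra.norm k α = 1) :
    (∃ a : k, algebraMap k L a = α + α⁻¹) ∧
    (∀ a : k, algebraMap k L a = α + α⁻¹ →
      Nonempty (AdjoinRoot (X ^ 3 - C α : L[X]) ≃ₐ[L]
        TensorProduct k L
          (AdjoinRoot (X ^ 3 - C 3 * X - C a : k[X])))) ∧
    (∃ (F : AdjoinRoot (X ^ 3 - C α : L[X]) →ₐ[L]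
          AdjoinRoot (X ^ 3 - C 3 * X - C (α + α⁻¹) : L[X]))
       (G : AdjoinRoot (X ^ 3 - C 3 * X - C (α + α⁻¹) : L[X]) →ₐ[L]
          AdjoinRoot (X ^ 3 - C α : L[X])),
      F (AdjoinRoot.root (X ^ 3 - C α : L[X])) =
        (-α / (α ^ 2 - 1)) •
          ((AdjoinRoot.root (X ^ 3 - C 3 * X - C (α + α⁻¹) : L[X])) ^ 2
            - α • AdjoinRoot.root (X ^ 3 - C 3 * X - C (α + α⁻¹) : L[X]) - 2) ∧
      G (AdjoinRoot.root (X ^ 3 - C 3 * X - C (α + α⁻¹) : L[X])) =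
        AdjoinRoot.root (X ^ 3 - C α : L[X])
          + α⁻¹ • (AdjoinRoot.root (X ^ 3 - C α : L[X])) ^ 2 ∧
      F.comp G = AlgHom.id L _ ∧ G.comp F = AlgHom.id L _) := by
  have hα : α ^ 2 ≠ 1 := sq_ne_one_iff.mpr ⟨h1, hm1⟩
  have hFG := cubeToTrace_comp_traceToCube h0 hα
  have hGF := traceToCube_comp_cubeToTrace h0 hα
  refine ⟨exists_algebraMap_eq_add_inv hgen (sq_add_self_add_one_eq_zero hζ3 hζ1) hnorm,
    fun a ha => ?_, _, _, ?_, ?_, hFG, hGF⟩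
  · have hq : (X ^ 3 - C 3 * X - C a : k[X]).map (algebraMap k L) =
        X ^ 3 - C 3 * X - C (α + α⁻¹) := by
      simp [ha, map_ofNat]
    exact ⟨(AlgEquiv.ofAlgHom _ _ hFG hGF).trans
      ((AdjoinRoot.tensorAlgEquivMap _).trans (AdjoinRoot.algEquivOfEq L _ _ hq)).symm⟩
  · rw [cubeToTrace_root]
    simp [cubeRootOfTrace, Algebra.smul_def]
  · rw [traceToCube_root]
    simp [traceOfCubeRoot, Algebra.smul_def]

set_option maxHeartbeats 1000000 in
/-- Let `k` be a field with `char k ≠ 3` and `L = k(μ₃)`. Let `α ∈ L` with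
`α ∉ {0, 1, −1}`, of norm `1` if `μ₃ ⊄ k`. Then `α + α⁻¹` comes from `k`, one has
`L[u]/(u³ − α) ≅ (k[t]/(t³ − 3t − (α + α⁻¹))) ⊗_k L` as `L`-algebras, and
explicitly `u ↦ (−α/(α² − 1))·(t² − αt − 2)` and `t ↦ u + u⁻¹ (= u + α⁻¹u²)` are
mutually inverse `L`-algebra isomorphisms between `L[u]/(u³ − α)` and
`L[t]/(t³ − 3t − α − α⁻¹)`. -/
theorem stmt_7 (k L : Type*) [Field k] [Field L] [Algebra k L]
    (hchar : (3 : k) ≠ 0)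
    (ζ : L) (hζ3 : ζ ^ 3 = 1) (hζ1 : ζ ≠ 1)
    (hgen : Algebra.adjoin k ({ζ} : Set L) = ⊤)
    (α : L) (h0 : α ≠ 0) (h1 : α ≠ 1) (hm1 : α ≠ -1)
    (hnorm : (¬ ∃ ω : k, ω ^ 3 = 1 ∧ ω ≠ 1) → Algebra.norm k α = 1) :
    (∃ a : k, algebraMap k L a = α + α⁻¹) ∧
    (∀ a : k, algebraMap k L a = α + α⁻¹ →
      Nonempty (AdjoinRoot (X ^ 3 - C α : L[X]) ≃ₐ[L]
        TensorProduct k L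
          (AdjoinRoot (X ^ 3 - C 3 * X - C a : k[X])))) ∧
    (∃ (F : AdjoinRoot (X ^ 3 - C α : L[X]) →ₐ[L]
          AdjoinRoot (X ^ 3 - C 3 * X - C (α + α⁻¹) : L[X]))
       (G : AdjoinRoot (X ^ 3 - C 3 * X - C (α + α⁻¹) : L[X]) →ₐ[L]
          AdjoinRoot (X ^ 3 - C α : L[X])),
      F (AdjoinRoot.root (X ^ 3 - C α : L[X])) =
        (-α / (α ^ 2 - 1)) •
          ((AdjoinRoot.root (X ^ 3 - C 3 * X - C (α + α⁻¹) : L[X])) ^ 2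
            - α • AdjoinRoot.root (X ^ 3 - C 3 * X - C (α + α⁻¹) : L[X]) - 2) ∧
      G (AdjoinRoot.root (X ^ 3 - C 3 * X - C (α + α⁻¹) : L[X])) =
        AdjoinRoot.root (X ^ 3 - C α : L[X])
          + α⁻¹ • (AdjoinRoot.root (X ^ 3 - C α : L[X])) ^ 2 ∧
      F.comp G = AlgHom.id L _ ∧ G.comp F = AlgHom.id L _) :=
  stmt_7_general k L ζ hζ3 hζ1 hgen α h0 h1 hm1 hnorm
end

section
/- Let p be an odd prime and let A₁, A₂, A₃ be nonzero rational numbers such that A₃/A₂ is the cube of a nonzero rational number. Assume v_p(A₁) is even, A₁ is not a square in ℚ_p, v_p(A₂) is odd, and v_p(A₂) = v_p(A₃). If there exist w, x₁, x₂, x₃ ∈ ℚ_p with (x₁, x₂, x₃) ≠ (0, 0, 0) and w² = A₁x₁⁶ + A₂x₂⁶ + A₃x₃⁶, then −A₂/A₃ is a square in ℚ_p. -/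
/-!
For `p` odd and `a ∈ ℚ_p` a non-square of even valuation, every nonzero value of the form
`w² - a z²` has even valuation: the two terms have even valuations, so they can only cancel
partially when their valuations agree, and then `a z² / w²` is `≡ 1` modulo `p`, hence a square
by Hensel's lemma. Putting `Xᵢ = xᵢ³`, the sextic equation becomes
`w² - A₁ X₁² = A₃ (X₃² - b X₂²)` with `b = -A₂/A₃` of valuation `0`. If `b` were not a square,
the left side would have even valuation and the right side the odd valuation
`v(A₃) + even`; the case `X₂ = X₃ = 0` makes `A₁` a square.
-/

lemma sq_sub_mul_sq_ne_zero {K : Type*} [Field K] {a w z : K} (ha : ¬IsSquare a)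
    (hwz : w ≠ 0 ∨ z ≠ 0) : w ^ 2 - a * z ^ 2 ≠ 0 := by
  intro h
  rcases eq_or_ne z 0 with rfl | hz
  · simp_all
  · exact ha ⟨w / z, by field_simp; linear_combination -h⟩

namespace Padic

variable {p : ℕ} [Fact p.Prime]

lemma valuation_eq_of_norm_eq {x y : ℚ_[p]} (hx : x ≠ 0) (hy : y ≠ 0) (h : ‖x‖ = ‖y‖) :
    x.valuation = y.valuation := by
  rw [norm_eq_zpow_neg_valuation hx, norm_eq_zpow_neg_valuation hy] at h
  exact neg_injective (zpow_right_injective₀ (mod_cast (Fact.out : p.Prime).pos)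
    (mod_cast (Fact.out : p.Prime).ne_one) h)

lemma valuation_lt_valuation_iff {x y : ℚ_[p]} (hx : x ≠ 0) (hy : y ≠ 0) :
    x.valuation < y.valuation ↔ ‖y‖ < ‖x‖ := by
  rw [norm_eq_zpow_neg_valuation hx, norm_eq_zpow_neg_valuation hy,
    zpow_lt_zpow_iff_right₀ (mod_cast (Fact.out : p.Prime).one_lt), neg_lt_neg_iff]

@[simp]
lemma valuation_neg (x : ℚ_[p]) : (-x).valuation = x.valuation := by
  rcases eq_or_ne x 0 with rfl | hx
  · simp
  · exact valuation_eq_of_norm_eq (neg_ne_zero.2 hx) hx (norm_neg x)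

lemma valuation_add_of_valuation_lt {x y : ℚ_[p]} (hx : x ≠ 0)
    (h : x.valuation < y.valuation) : (x + y).valuation = x.valuation := by
  rcases eq_or_ne y 0 with rfl | hy
  · simp
  have hlt : ‖y‖ < ‖x‖ := (valuation_lt_valuation_iff hx hy).1 h
  have hnorm : ‖x + y‖ = ‖x‖ := by
    rw [add_eq_max_of_ne hlt.ne', max_eq_left hlt.le]
  exact valuation_eq_of_norm_eq (norm_ne_zero_iff.1 (hnorm ▸ norm_ne_zero_iff.2 hx)) hx hnorm

lemma isSquare_of_norm_sub_one_lt (hp : p ≠ 2) {u : ℚ_[p]} (hu : ‖u - 1‖ < 1) :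
    IsSquare u := by
  have hu_int : ‖u‖ ≤ 1 := by
    simpa using (nonarchimedean (u - 1) 1).trans (max_le hu.le (by simp))
  set z : ℤ_[p] := ⟨u, hu_int⟩
  set F : Polynomial ℤ_[p] := .X ^ 2 - .C z
  have hF' : F.derivative.aeval (1 : ℤ_[p]) = 2 := by norm_num [F]
  have h2 : ‖(2 : ℤ_[p])‖ = 1 := by
    simpa using PadicInt.norm_natCast_eq_one_iff.2
      (Nat.coprime_two_right.2 ((Fact.out : p.Prime).odd_of_ne_two hp))
  have hnorm : ‖F.aeval (1 : ℤ_[p])‖ < ‖F.derivative.aeval (1 : ℤ_[p])‖ ^ 2 := by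
    have hF : F.aeval (1 : ℤ_[p]) = 1 - z := by simp [F]
    rw [hF', h2, one_pow, hF, norm_sub_rev, PadicInt.norm_def, PadicInt.coe_sub,
      PadicInt.coe_one]
    exact hu
  obtain ⟨r, hr, -⟩ := hensels_lemma hnorm
  have hr2 : r ^ 2 = z := by simpa [F, sub_eq_zero] using hr
  exact ⟨r, by simpa [sq, z] using congrArg ((↑) : ℤ_[p] → ℚ_[p]) hr2.symm⟩

lemma isSquare_of_norm_sq_sub_lt (hp : p ≠ 2) {b w : ℚ_[p]} (h : ‖w ^ 2 - b‖ < ‖w ^ 2‖) :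
    IsSquare b := by
  have hw : w ^ 2 ≠ 0 := norm_pos_iff.1 ((norm_nonneg _).trans_lt h)
  obtain ⟨r, hr⟩ := isSquare_of_norm_sub_one_lt hp (u := b / w ^ 2) (by
    rwa [← div_self hw, ← sub_div, norm_div, norm_sub_rev, div_lt_one (norm_pos_iff.2 hw)])
  refine ⟨w * r, ?_⟩
  rw [div_eq_iff hw] at hr
  rw [hr]; ring

lemma even_valuation_sq_sub_mul_sq (hp : p ≠ 2) {a w z : ℚ_[p]} (ha : ¬IsSquare a)
    (hav : Even a.valuation) (hx : w ^ 2 - a * z ^ 2 ≠ 0) :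
    Even (w ^ 2 - a * z ^ 2).valuation := by
  rcases eq_or_ne z 0 with rfl | hz
  · simp
  have ha0 : a ≠ 0 := by rintro rfl; exact ha .zero
  have haz : a * z ^ 2 ≠ 0 := mul_ne_zero ha0 (pow_ne_zero 2 hz)
  have hEaz : Even (a * z ^ 2).valuation := by
    simpa [valuation_mul ha0 (pow_ne_zero 2 hz), Int.even_add] using hav
  rcases eq_or_ne w 0 with rfl | hw
  · simpa using hEaz
  have hw2 : w ^ 2 ≠ 0 := pow_ne_zero 2 hw
  have hEw : Even (w ^ 2).valuation := by simp
  rw [sub_eq_add_neg] at hx ⊢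
  rcases lt_trichotomy (w ^ 2).valuation (a * z ^ 2).valuation with hlt | heq | hgt
  · rwa [valuation_add_of_valuation_lt hw2 (by rwa [valuation_neg])]
  · have hge : (w ^ 2).valuation ≤ (w ^ 2 + -(a * z ^ 2)).valuation := by
      simpa [heq] using le_valuation_add hx
    suffices ¬(w ^ 2).valuation < (w ^ 2 + -(a * z ^ 2)).valuation by
      rwa [← le_antisymm hge (not_lt.1 this)]
    intro hlt
    have hsq : IsSquare (a * z ^ 2) := isSquare_of_norm_sq_sub_lt hp
      (by rwa [sub_eq_add_neg, ← valuation_lt_valuation_iff hw2 hx])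
    exact ha (by simpa [hz] using hsq.div (IsSquare.sq z))
  · rw [add_comm, valuation_add_of_valuation_lt (neg_ne_zero.2 haz) (by rwa [valuation_neg]),
      valuation_neg]
    exact hEaz

end Padic

open Padic in
theorem stmt_8_general (p : ℕ) [Fact p.Prime] (hodd : p ≠ 2)
    (A₁ A₂ A₃ : ℚ) (h2 : A₂ ≠ 0) (h3 : A₃ ≠ 0)
    (hv1 : Even (padicValRat p A₁))
    (hns : ¬ ∃ y : ℚ_[p], y ^ 2 = (A₁ : ℚ_[p]))
    (hv2 : Odd (padicValRat p A₂))
    (hv23 : padicValRat p A₂ = padicValRat p A₃)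
    (hsol : ∃ w x₁ x₂ x₃ : ℚ_[p], (x₁ ≠ 0 ∨ x₂ ≠ 0 ∨ x₃ ≠ 0) ∧
        w ^ 2 = (A₁ : ℚ_[p]) * x₁ ^ 6 + (A₂ : ℚ_[p]) * x₂ ^ 6 + (A₃ : ℚ_[p]) * x₃ ^ 6) :
    ∃ y : ℚ_[p], y ^ 2 = ((-A₂ / A₃ : ℚ) : ℚ_[p]) := by
  obtain ⟨w, x₁, x₂, x₃, hx, hw⟩ := hsol
  by_contra hnb
  set b : ℚ_[p] := ((-A₂ / A₃ : ℚ) : ℚ_[p]) with hb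
  have hA₁_sq : ¬IsSquare (A₁ : ℚ_[p]) := fun ⟨r, hr⟩ ↦ hns ⟨r, by rw [hr, sq]⟩
  have hb_sq : ¬IsSquare b := fun ⟨r, hr⟩ ↦ hnb ⟨r, by rw [hr, sq]⟩
  have hA₃ : (A₃ : ℚ_[p]) ≠ 0 := by exact_mod_cast h3
  have hx₂₃ : x₃ ^ 3 ≠ 0 ∨ x₂ ^ 3 ≠ 0 := by
    by_contra! h
    obtain ⟨rfl, rfl⟩ : x₃ = 0 ∧ x₂ = 0 := by simpa using h
    have hx₁ : x₁ ≠ 0 := by simpa using hx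
    exact hA₁_sq ⟨w / x₁ ^ 3, by field_simp; linear_combination -hw⟩
  have hnorm_forms : w ^ 2 - A₁ * (x₁ ^ 3) ^ 2 = A₃ * ((x₃ ^ 3) ^ 2 - b * (x₂ ^ 3) ^ 2) := by
    rw [hw, hb, Rat.cast_div, mul_sub, ← mul_assoc, mul_div_cancel₀ _ hA₃]
    push_cast; ring
  have hR := sq_sub_mul_sq_ne_zero hb_sq hx₂₃
  have hL_even := even_valuation_sq_sub_mul_sq hodd hA₁_sq (by simpa using hv1)
    (hnorm_forms ▸ mul_ne_zero hA₃ hR)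
  have hR_even := even_valuation_sq_sub_mul_sq hodd hb_sq
    (by rw [hb, valuation_ratCast, padicValRat.div (neg_ne_zero.2 h2) h3, padicValRat.neg, hv23,
      sub_self]; exact Even.zero) hR
  rw [hnorm_forms, valuation_mul hA₃ hR, valuation_ratCast, ← hv23] at hL_even
  exact Int.not_even_iff_odd.2 hv2 (by simpa [Int.even_add, hR_even] using hL_even)

/-- Let `p` be an odd prime and `A₁, A₂, A₃` nonzero rationals with `A₃/A₂` a cube
of a nonzero rational. If `v_p(A₁)` is even, `A₁` is not a square in `ℚ_p`,
`v_p(A₂)` is odd and `v_p(A₂) = v_p(A₃)`, then any nontrivial solution of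
`w² = A₁x₁⁶ + A₂x₂⁶ + A₃x₃⁶` over `ℚ_p` forces `−A₂/A₃` to be a square in `ℚ_p`. -/
theorem stmt_8 (p : ℕ) [Fact p.Prime] (hodd : p ≠ 2)
    (A₁ A₂ A₃ : ℚ) (h1 : A₁ ≠ 0) (h2 : A₂ ≠ 0) (h3 : A₃ ≠ 0)
    (c : ℚ) (hc : c ≠ 0) (hcube : c ^ 3 = A₃ / A₂)
    (hv1 : Even (padicValRat p A₁))
    (hns : ¬ ∃ y : ℚ_[p], y ^ 2 = (A₁ : ℚ_[p]))
    (hv2 : Odd (padicValRat p A₂))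
    (hv23 : padicValRat p A₂ = padicValRat p A₃)
    (hsol : ∃ w x₁ x₂ x₃ : ℚ_[p], (x₁ ≠ 0 ∨ x₂ ≠ 0 ∨ x₃ ≠ 0) ∧
        w ^ 2 = (A₁ : ℚ_[p]) * x₁ ^ 6 + (A₂ : ℚ_[p]) * x₂ ^ 6 + (A₃ : ℚ_[p]) * x₃ ^ 6) :
    ∃ y : ℚ_[p], y ^ 2 = ((-A₂ / A₃ : ℚ) : ℚ_[p]) :=
  stmt_8_general p hodd A₁ A₂ A₃ h2 h3 hv1 hns hv2 hv23 hsol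
end

section
/- Let a, b be positive integers with gcd(ab, 42) = 1 and b ≡ 1 (mod 56), and suppose that every prime p dividing b for which 7 is a quadratic non-residue modulo p satisfies both p ≡ 2 (mod 3) and p ≡ 3 (mod 4). Then the equation w² = 28a²x₁⁶ + 2b·x₂⁶ + 686b·x₃⁶ has a solution with (x₁, x₂, x₃) ≠ (0, 0, 0) over the real numbers and over the field ℚ_p of p-adic numbers for every prime p. -/
/-!
Over `ℝ`, and over `ℚ_p` whenever `7` is a `p`-adic square, the point `(x₁, x₂, x₃) = (1, 0, 0)`
works. By Hensel's lemma an integer is a `p`-adic square as soon as it is a nonzero square mod `p`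
(`p` odd), or `≡ 1 (mod 8)` (`p = 2`). For `p = 7` the coefficient `2b ≡ 2 ≡ 3²` is a square. For
any other odd `p` with `(7/p) = -1`: if `p ∣ b` then `p ≡ 3 (mod 4)`, so `-7 = s²` and `(0, s, 1)`
lies on `w = 0`; if `p ∤ b` then exactly one of `2b` and `686b = 7³·2b` is a square mod `p`.
-/

/-- The Legendre symbol `(a/p)` for a prime `p` given as a hypothesis. -/
def legSym (p : ℕ) (hp : p.Prime) (a : ℤ) : ℤ :=
  haveI : Fact p.Prime := ⟨hp⟩
  legendreSym p a

/-- Solubility of `w² = A₁x₁⁶ + A₂x₂⁶ + A₃x₃⁶` over `ℚ_p` with `(x₁,x₂,x₃) ≠ 0`. -/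
def solublePadic (p : ℕ) (hp : p.Prime) (A₁ A₂ A₃ : ℚ) : Prop :=
  haveI : Fact p.Prime := ⟨hp⟩
  ∃ w x₁ x₂ x₃ : ℚ_[p], (x₁ ≠ 0 ∨ x₂ ≠ 0 ∨ x₃ ≠ 0) ∧
    w ^ 2 = (A₁ : ℚ_[p]) * x₁ ^ 6 + (A₂ : ℚ_[p]) * x₂ ^ 6 + (A₃ : ℚ_[p]) * x₃ ^ 6

namespace PadicInt

variable {p : ℕ} [Fact p.Prime]

open Polynomial in
theorem exists_pow_eq_of_norm_lt {n : ℕ} {c a : ℤ_[p]}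
    (h : ‖a ^ n - c‖ < ‖(n : ℤ_[p]) * a ^ (n - 1)‖ ^ 2) : ∃ z : ℤ_[p], z ^ n = c := by
  obtain ⟨z, hz, -⟩ :=
    hensels_lemma (F := X ^ n - C c) (a := a) (by simpa [derivative_X_pow] using h)
  exact ⟨z, sub_eq_zero.mp (by simpa using hz)⟩

theorem norm_lt_one_iff_toZMod_eq_zero (x : ℤ_[p]) : ‖x‖ < 1 ↔ toZMod x = 0 := by
  rw [← RingHom.mem_ker, ker_toZMod, IsLocalRing.mem_maximalIdeal, mem_nonunits]

theorem exists_pow_eq_of_toZMod {n : ℕ} {c : ℤ_[p]} {x : ZMod p} (hx : x ^ n = toZMod c)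
    (hn : (n : ZMod p) * x ^ (n - 1) ≠ 0) : ∃ z : ℤ_[p], z ^ n = c := by
  obtain ⟨a, rfl⟩ := ZMod.ringHom_surjective toZMod x
  refine exists_pow_eq_of_norm_lt (a := a) ?_
  have hderiv : ‖(n : ℤ_[p]) * a ^ (n - 1)‖ = 1 :=
    (norm_le_one _).antisymm <| not_lt.mp <| by
      rw [norm_lt_one_iff_toZMod_eq_zero]; simpa using hn
  rw [hderiv, one_pow, norm_lt_one_iff_toZMod_eq_zero, map_sub, map_pow, hx, sub_self]

end PadicInt

namespace Padic

variable {p : ℕ} [Fact p.Prime]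

theorem exists_sq_eq_of_legendreSym_eq_one (hp : p ≠ 2) {c : ℤ} (h : legendreSym p c = 1) :
    ∃ w : ℚ_[p], w ^ 2 = c := by
  have hc : (c : ZMod p) ≠ 0 := by
    rw [Ne, ← legendreSym.eq_zero_iff, h]; exact one_ne_zero
  obtain ⟨r, hr⟩ := (legendreSym.eq_one_iff p hc).mp h
  have hr0 : r ≠ 0 := by rintro rfl; simp_all
  have h2 : (2 : ZMod p) ≠ 0 := Ring.two_ne_zero (by rwa [ZMod.ringChar_zmod_n])
  obtain ⟨z, hz⟩ := PadicInt.exists_pow_eq_of_toZMod (n := 2) (c := (c : ℤ_[p])) (x := r)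
    (by rw [map_intCast, hr, sq]) (by simpa using mul_ne_zero h2 hr0)
  exact ⟨z, by exact_mod_cast congrArg ((↑) : ℤ_[p] → ℚ_[p]) hz⟩

theorem exists_sq_eq_of_emod_eight_eq_one {c : ℤ} (hc : c % 8 = 1) :
    ∃ w : ℚ_[2], w ^ 2 = c := by
  have hnorm : ‖((1 - c : ℤ) : ℤ_[2])‖ ≤ 2⁻¹ ^ 3 := by
    simpa using PadicInt.norm_int_le_pow_iff_dvd (p := 2) (k := 1 - c) (n := 3) |>.mpr (by omega)
  obtain ⟨z, hz⟩ := PadicInt.exists_pow_eq_of_norm_lt (n := 2) (c := (c : ℤ_[2])) (a := 1) <| by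
    have h2 : ‖((2 : ℕ) : ℤ_[2])‖ = 2⁻¹ := by simpa using PadicInt.norm_p (p := 2)
    push_cast at hnorm h2 ⊢
    rw [one_pow, pow_one, mul_one, h2]
    exact hnorm.trans_lt (by norm_num)
  exact ⟨z, by exact_mod_cast congrArg ((↑) : ℤ_[2] → ℚ_[2]) hz⟩

end Padic

section LocalSolubility

variable (a b : ℕ)

theorem solublePadic_two (hb : b % 8 = 1) :
    solublePadic 2 Nat.prime_two (28 * (a : ℚ) ^ 2) (2 * (b : ℚ)) (686 * (b : ℚ)) := by
  -- `(x₁, x₂, x₃) = (0, 1, 7)`: `2b + 686b·7⁶ = 16·5044201·b` and `5044201 ≡ 1 (mod 8)`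
  obtain ⟨s, hs⟩ := Padic.exists_sq_eq_of_emod_eight_eq_one (c := 5044201 * b) (by omega)
  refine ⟨4 * s, 0, 1, 7, by simp, ?_⟩
  push_cast at hs ⊢
  linear_combination 16 * hs

theorem solublePadic_seven (hb : b % 7 = 1) :
    solublePadic 7 (by norm_num) (28 * (a : ℚ) ^ 2) (2 * (b : ℚ)) (686 * (b : ℚ)) := by
  have := Fact.mk (by norm_num : Nat.Prime 7)
  have h : legendreSym 7 (2 * b) = 1 := by
    rw [legendreSym.mod, show (2 * b : ℤ) % (7 : ℕ) = 2 by omega,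
      legendreSym.at_two (by norm_num)]
    decide
  obtain ⟨w, hw⟩ := Padic.exists_sq_eq_of_legendreSym_eq_one (by norm_num) h
  refine ⟨w, 0, 1, 0, by simp, ?_⟩
  push_cast at hw ⊢
  linear_combination hw

theorem solublePadic_of_ne_two_of_ne_seven {p : ℕ} (hp : p.Prime) (hp2 : p ≠ 2) (hp7 : p ≠ 7)
    (hb : p ∣ b → legSym p hp 7 = -1 → p % 4 = 3) :
    solublePadic p hp (28 * (a : ℚ) ^ 2) (2 * (b : ℚ)) (686 * (b : ℚ)) := by
  have := Fact.mk hp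
  have h7 : ((7 : ℤ) : ZMod p) ≠ 0 := by
    rw [Ne, ZMod.intCast_zmod_eq_zero_iff_dvd]
    exact_mod_cast fun h => hp7 ((Nat.prime_dvd_prime_iff_eq hp (by norm_num)).mp h)
  rcases legendreSym.eq_one_or_neg_one p h7 with h7 | h7
  · obtain ⟨s, hs⟩ := Padic.exists_sq_eq_of_legendreSym_eq_one hp2 h7
    refine ⟨2 * a * s, 1, 0, 0, by simp, ?_⟩
    push_cast at hs ⊢
    linear_combination 4 * (a : ℚ_[p]) ^ 2 * hs
  by_cases hpb : p ∣ b
  · -- a square root `s` of `-7` gives `2b·s⁶ + 686b·1⁶ = 0`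
    have h : legendreSym p (-7) = 1 := by
      rw [show (-7 : ℤ) = -1 * 7 by norm_num, legendreSym.mul, legendreSym.at_neg_one hp2,
        ZMod.χ₄_nat_three_mod_four (hb hpb h7), h7]
      norm_num
    obtain ⟨s, hs⟩ := Padic.exists_sq_eq_of_legendreSym_eq_one hp2 h
    refine ⟨0, 0, s, 1, by simp, ?_⟩
    push_cast at hs ⊢
    linear_combination -2 * (b : ℚ_[p]) * (s ^ 4 - 7 * s ^ 2 + 49) * hs
  have h2b : ((2 * b : ℤ) : ZMod p) ≠ 0 := by
    rw [Ne, ZMod.intCast_zmod_eq_zero_iff_dvd]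
    intro h
    rcases Int.Prime.dvd_mul' hp h with h | h
    · exact hp2 ((Nat.prime_dvd_prime_iff_eq hp Nat.prime_two).mp (by exact_mod_cast h))
    · exact hpb (by exact_mod_cast h)
  rcases legendreSym.eq_one_or_neg_one p h2b with h2b | h2b
  · obtain ⟨w, hw⟩ := Padic.exists_sq_eq_of_legendreSym_eq_one hp2 h2b
    refine ⟨w, 0, 1, 0, by simp, ?_⟩
    push_cast at hw ⊢
    linear_combination hw
  · have h : legendreSym p (686 * b) = 1 := by
      rw [show (686 * b : ℤ) = 2 * b * 7 * 7 * 7 by ring, legendreSym.mul, legendreSym.mul,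
        legendreSym.mul, h2b, h7]
      norm_num
    obtain ⟨w, hw⟩ := Padic.exists_sq_eq_of_legendreSym_eq_one hp2 h
    refine ⟨w, 0, 0, 1, by simp, ?_⟩
    push_cast at hw ⊢
    linear_combination hw

end LocalSolubility

theorem stmt_9_general (a b : ℕ)
    (hcong : b % 56 = 1)
    (hprimes : ∀ p : ℕ, ∀ hp : p.Prime, p ∣ b → legSym p hp 7 = -1 →
      p % 3 = 2 ∧ p % 4 = 3) :
    (∃ w x₁ x₂ x₃ : ℝ, (x₁ ≠ 0 ∨ x₂ ≠ 0 ∨ x₃ ≠ 0) ∧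
        w ^ 2 = 28 * (a : ℝ) ^ 2 * x₁ ^ 6 + 2 * (b : ℝ) * x₂ ^ 6
          + 686 * (b : ℝ) * x₃ ^ 6) ∧
    ∀ p : ℕ, ∀ hp : p.Prime,
      solublePadic p hp (28 * (a : ℚ) ^ 2) (2 * (b : ℚ)) (686 * (b : ℚ)) := by
  refine ⟨⟨2 * a * √7, 1, 0, 0, by simp, ?_⟩, fun p hp => ?_⟩
  · linear_combination 4 * (a : ℝ) ^ 2 * Real.sq_sqrt (by norm_num : (0 : ℝ) ≤ 7)
  rcases eq_or_ne p 2 with rfl | hp2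
  · exact solublePadic_two a b (by omega)
  rcases eq_or_ne p 7 with rfl | hp7
  · exact solublePadic_seven a b (by omega)
  exact solublePadic_of_ne_two_of_ne_seven a b hp hp2 hp7 fun hpb h => (hprimes p hp hpb h).2

/-- Everywhere local solubility of `w² = 28a²x₁⁶ + 2b·x₂⁶ + 686b·x₃⁶` for positive
integers `a, b` with `gcd(ab, 42) = 1`, `b ≡ 1 (mod 56)`, and such that every prime
`p ∣ b` with `(7/p) = −1` satisfies `p ≡ 2 (mod 3)` and `p ≡ 3 (mod 4)`. -/
theorem stmt_9 (a b : ℕ) (ha : 0 < a) (hb : 0 < b)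
    (hgcd : Nat.gcd (a * b) 42 = 1) (hcong : b % 56 = 1)
    (hprimes : ∀ p : ℕ, ∀ hp : p.Prime, p ∣ b → legSym p hp 7 = -1 →
      p % 3 = 2 ∧ p % 4 = 3) :
    (∃ w x₁ x₂ x₃ : ℝ, (x₁ ≠ 0 ∨ x₂ ≠ 0 ∨ x₃ ≠ 0) ∧
        w ^ 2 = 28 * (a : ℝ) ^ 2 * x₁ ^ 6 + 2 * (b : ℝ) * x₂ ^ 6
          + 686 * (b : ℝ) * x₃ ^ 6) ∧
    ∀ p : ℕ, ∀ hp : p.Prime,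
      solublePadic p hp (28 * (a : ℚ) ^ 2) (2 * (b : ℚ)) (686 * (b : ℚ)) :=
  stmt_9_general a b hcong hprimes
end

section
/- Let K = ℚ(ω) be the third cyclotomic field, where ω is a primitive cube root of unity. For every nonzero rational number q: (i) q is a square in K if and only if q is a square in ℚ or −3q is a square in ℚ; (ii) q is a cube in K if and only if q is a cube in ℚ; (iii) q is a sixth power in K if and only if q is a sixth power in ℚ or −27q is a sixth power in ℚ. -/
/-!
Write `K = ℚ(ω) = ℚ(s)` with `s = 2ω + 1`, so that `s² = -3` and `1, s` is a `ℚ`-basis of `K`.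
Expanding `(a + b s)ⁿ = q` in this basis, the `s`-coordinate forces `ab = 0` for `n = 2` and
`b (a² - b²) = 0` for `n = 3`, and each case exhibits `q` or `-3q` as a rational square,
resp. `q` as a rational cube.
A sixth power in `K` is both a square and a cube there, hence a cube `c³` in `ℚ` and a square
`a²` or `-3a²` in `ℚ`, and a rational that is both a square and a cube is a sixth power.
Conversely `s⁶ = -27`, so `-27q = z⁶` gives `q = (z / s)⁶`.
-/

open Module

lemma exists_pow_six_eq_of_sq_eq_of_pow_three_eq {G : Type*} [CommGroupWithZero G] {r a c : G}
    (ha : a ^ 2 = r) (hc : c ^ 3 = r) : ∃ z : G, z ^ 6 = r := by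
  rcases eq_or_ne c 0 with rfl | hc0
  · exact ⟨0, by simpa using hc⟩
  have hr : r ≠ 0 := hc ▸ pow_ne_zero 3 hc0
  refine ⟨a / c, ?_⟩
  calc (a / c) ^ 6 = (a ^ 2) ^ 3 / (c ^ 3) ^ 2 := by rw [div_pow, ← pow_mul, ← pow_mul]
    _ = r := by rw [ha, hc, pow_succ r 2, mul_div_cancel_left₀ _ (pow_ne_zero 2 hr)]

lemma IsPrimitiveRoot.two_mul_add_one_sq {R : Type*} [CommRing R] [IsDomain R] {ζ : R}
    (hζ : IsPrimitiveRoot ζ 3) : (2 * ζ + 1) ^ 2 = -3 := by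
  have h := hζ.geom_sum_eq_zero (by norm_num)
  simp only [Finset.sum_range_succ, Finset.sum_range_zero] at h
  linear_combination 4 * h

section QuadraticExtension

variable {F L : Type*} [Field F] [Field L] [Algebra F L] {s : L}

lemma exists_algebraMap_add_algebraMap_mul_eq (hL : finrank F L = 2)
    (hs : s ∉ Set.range (algebraMap F L)) (y : L) :
    ∃ a b : F, algebraMap F L a + algebraMap F L b * s = y := by
  have hind : LinearIndependent F ![1, s] :=
    (LinearIndependent.pair_iff' one_ne_zero).2 fun a ha ↦
      hs ⟨a, by rwa [Algebra.algebraMap_eq_smul_one]⟩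
  have hspan := hind.span_eq_top_of_card_eq_finrank (by simp [hL])
  rw [Matrix.range_cons, Matrix.range_cons, Matrix.range_empty, Set.union_empty] at hspan
  obtain ⟨a, b, hab⟩ := Submodule.mem_span_pair.1 (hspan ▸ Submodule.mem_top (x := y))
  exact ⟨a, b, by simpa [Algebra.smul_def] using hab⟩

lemma eq_zero_and_eq_of_algebraMap_add_algebraMap_mul_eq (hs : s ∉ Set.range (algebraMap F L))
    {a b c : F} (h : algebraMap F L a + algebraMap F L b * s = algebraMap F L c) :
    b = 0 ∧ a = c := by
  obtain rfl : b = 0 := by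
    by_contra hb
    refine hs ⟨(c - a) / b, ?_⟩
    rw [map_div₀, map_sub, ← h, add_sub_cancel_left, mul_div_cancel_left₀]
    simpa using hb
  simpa using h

lemma exists_sq_eq_algebraMap_iff (hL : finrank F L = 2) (h2 : (2 : F) ≠ 0) {d : F}
    (hsd : s ^ 2 = algebraMap F L d) (hs : s ∉ Set.range (algebraMap F L)) (q : F) :
    (∃ y : L, y ^ 2 = algebraMap F L q) ↔ (∃ z : F, z ^ 2 = q) ∨ ∃ z : F, z ^ 2 = d * q := by
  have hs0 : s ≠ 0 := fun h ↦ hs ⟨0, by simp [h]⟩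
  constructor
  · rintro ⟨y, hy⟩
    obtain ⟨a, b, rfl⟩ := exists_algebraMap_add_algebraMap_mul_eq hL hs y
    have hexp : (algebraMap F L a + algebraMap F L b * s) ^ 2 =
        algebraMap F L (a ^ 2 + d * b ^ 2) + algebraMap F L (2 * a * b) * s := by
      simp only [map_add, map_mul, map_pow, map_ofNat]
      linear_combination algebraMap F L b ^ 2 * hsd
    rw [hexp] at hy
    obtain ⟨hab, hq⟩ := eq_zero_and_eq_of_algebraMap_add_algebraMap_mul_eq hs hy
    rcases mul_eq_zero.1 hab with hab | rfl
    · obtain rfl := (mul_eq_zero.1 hab).resolve_left h2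
      exact Or.inr ⟨d * b, by linear_combination d * hq⟩
    · exact Or.inl ⟨a, by linear_combination hq⟩
  · rintro (⟨z, rfl⟩ | ⟨z, hz⟩)
    · exact ⟨algebraMap F L z, (map_pow _ _ _).symm⟩
    · refine ⟨algebraMap F L z / s, ?_⟩
      rw [div_pow, ← map_pow, hz, hsd, map_mul,
        mul_div_cancel_left₀ _ (hsd ▸ pow_ne_zero 2 hs0)]

lemma exists_pow_three_eq_algebraMap_iff (hL : finrank F L = 2)
    (hsd : s ^ 2 = algebraMap F L (-3)) (hs : s ∉ Set.range (algebraMap F L)) (q : F) :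
    (∃ y : L, y ^ 3 = algebraMap F L q) ↔ ∃ z : F, z ^ 3 = q := by
  -- `3 = 0` would force `s² = 0`, i.e. `s = 0 ∈ F`
  have h3 : (3 : F) ≠ 0 := fun h ↦ hs
    ⟨0, by rw [map_zero, eq_comm, ← pow_eq_zero_iff two_ne_zero, hsd, h, neg_zero, map_zero]⟩
  constructor
  · rintro ⟨y, hy⟩
    obtain ⟨a, b, rfl⟩ := exists_algebraMap_add_algebraMap_mul_eq hL hs y
    have hexp : (algebraMap F L a + algebraMap F L b * s) ^ 3 =
        algebraMap F L (a ^ 3 - 9 * a * b ^ 2) +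
          algebraMap F L (3 * b * (a - b) * (a + b)) * s := by
      simp only [map_add, map_sub, map_mul, map_pow, map_ofNat, map_neg] at hsd ⊢
      linear_combination (3 * algebraMap F L a * algebraMap F L b ^ 2 +
        algebraMap F L b ^ 3 * s) * hsd
    rw [hexp] at hy
    obtain ⟨hab, hq⟩ := eq_zero_and_eq_of_algebraMap_add_algebraMap_mul_eq hs hy
    rcases mul_eq_zero.1 hab with hab | hab
    · rcases mul_eq_zero.1 hab with hb | hab
      · obtain rfl := (mul_eq_zero.1 hb).resolve_left h3
        exact ⟨a, by linear_combination hq⟩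
      · exact ⟨-2 * a, by linear_combination hq - 9 * a * (a + b) * hab⟩
    · exact ⟨-2 * a, by linear_combination hq + 9 * a * (b - a) * hab⟩
  · rintro ⟨z, rfl⟩
    exact ⟨algebraMap F L z, (map_pow _ _ _).symm⟩

lemma exists_pow_six_eq_algebraMap_iff (hL : finrank F L = 2) (h2 : (2 : F) ≠ 0)
    (hsd : s ^ 2 = algebraMap F L (-3)) (hs : s ∉ Set.range (algebraMap F L)) (q : F) :
    (∃ y : L, y ^ 6 = algebraMap F L q) ↔ (∃ z : F, z ^ 6 = q) ∨ ∃ z : F, z ^ 6 = -27 * q := by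
  constructor
  · rintro ⟨y, hy⟩
    obtain ⟨c, hc⟩ := (exists_pow_three_eq_algebraMap_iff hL hsd hs q).1
      ⟨y ^ 2, by rw [← pow_mul, hy]⟩
    rcases (exists_sq_eq_algebraMap_iff hL h2 hsd hs q).1 ⟨y ^ 3, by rw [← pow_mul, hy]⟩ with
      ⟨a, ha⟩ | ⟨a, ha⟩
    · exact .inl (exists_pow_six_eq_of_sq_eq_of_pow_three_eq ha hc)
    · exact .inr (exists_pow_six_eq_of_sq_eq_of_pow_three_eq (a := 3 * a) (c := -3 * c)
        (by linear_combination 9 * ha) (by linear_combination -27 * hc))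
  · rintro (⟨z, rfl⟩ | ⟨z, hz⟩)
    · exact ⟨algebraMap F L z, (map_pow _ _ _).symm⟩
    · have hs6 : s ^ 6 = algebraMap F L (-27) := by
        rw [show 6 = 2 * 3 from rfl, pow_mul, hsd, ← map_pow]
        norm_num
      refine ⟨algebraMap F L z / s, ?_⟩
      have hs0 : s ≠ 0 := fun h ↦ hs ⟨0, by simp [h]⟩
      rw [div_pow, ← map_pow, hz, hs6, map_mul,
        mul_div_cancel_left₀ _ (hs6 ▸ pow_ne_zero 6 hs0)]

end QuadraticExtension

theorem stmt_11_general (q : ℚ) :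
    ((∃ y : CyclotomicField 3 ℚ, y ^ 2 = algebraMap ℚ (CyclotomicField 3 ℚ) q) ↔
      ((∃ z : ℚ, z ^ 2 = q) ∨ (∃ z : ℚ, z ^ 2 = -3 * q))) ∧
    ((∃ y : CyclotomicField 3 ℚ, y ^ 3 = algebraMap ℚ (CyclotomicField 3 ℚ) q) ↔
      (∃ z : ℚ, z ^ 3 = q)) ∧
    ((∃ y : CyclotomicField 3 ℚ, y ^ 6 = algebraMap ℚ (CyclotomicField 3 ℚ) q) ↔
      ((∃ z : ℚ, z ^ 6 = q) ∨ (∃ z : ℚ, z ^ 6 = -27 * q))) := by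
  -- passed by hand: instance search does not match the `Algebra ℚ` instance of the statement
  -- (`DivisionRing.toRatAlgebra`) with the one in `CyclotomicField.isCyclotomicExtension`
  have hK := CyclotomicField.isCyclotomicExtension 3 ℚ
  have hL : finrank ℚ (CyclotomicField 3 ℚ) = 2 :=
    (@IsCyclotomicExtension.finrank 3 _ ℚ _ _ _ _ _ hK
      (Polynomial.cyclotomic.irreducible_rat (by norm_num))).trans
        (Nat.totient_prime Nat.prime_three)
  obtain ⟨ζ, hζ⟩ := hK.exists_isPrimitiveRoot (Set.mem_singleton 3) (by norm_num)
  have hsd : (2 * ζ + 1) ^ 2 = algebraMap ℚ (CyclotomicField 3 ℚ) (-3) := by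
    rw [hζ.two_mul_add_one_sq, map_neg, map_ofNat]
  have hs : 2 * ζ + 1 ∉ Set.range (algebraMap ℚ (CyclotomicField 3 ℚ)) := by
    rintro ⟨t, ht⟩
    have ht2 : t ^ 2 = -3 :=
      (algebraMap ℚ (CyclotomicField 3 ℚ)).injective (by rw [map_pow, ht, hsd])
    nlinarith [sq_nonneg t]
  exact ⟨exists_sq_eq_algebraMap_iff hL two_ne_zero hsd hs q,
    exists_pow_three_eq_algebraMap_iff hL hsd hs q,
    exists_pow_six_eq_algebraMap_iff hL two_ne_zero hsd hs q⟩

/-- Let `K = ℚ(ω)` be the third cyclotomic field. A nonzero rational `q` is: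
(i) a square in `K` iff `q` or `−3q` is a square in `ℚ`;
(ii) a cube in `K` iff `q` is a cube in `ℚ`;
(iii) a sixth power in `K` iff `q` or `−27q` is a sixth power in `ℚ`. -/
theorem stmt_11 (q : ℚ) (hq : q ≠ 0) :
    ((∃ y : CyclotomicField 3 ℚ, y ^ 2 = algebraMap ℚ (CyclotomicField 3 ℚ) q) ↔
      ((∃ z : ℚ, z ^ 2 = q) ∨ (∃ z : ℚ, z ^ 2 = -3 * q))) ∧
    ((∃ y : CyclotomicField 3 ℚ, y ^ 3 = algebraMap ℚ (CyclotomicField 3 ℚ) q) ↔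
      (∃ z : ℚ, z ^ 3 = q)) ∧
    ((∃ y : CyclotomicField 3 ℚ, y ^ 6 = algebraMap ℚ (CyclotomicField 3 ℚ) q) ↔
      ((∃ z : ℚ, z ^ 6 = q) ∨ (∃ z : ℚ, z ^ 6 = -27 * q))) :=
  stmt_11_general q
end

section
/- Let K be the subfield of ℂ generated over ℚ by a primitive 12th root of unity ζ₁₂ and the real cube root of 2. For every nonzero rational number q: (i) q is a square in K if and only if one of q, −q, 3q, −3q is a square in ℚ; (ii) q is a cube in K if and only if one of q, 2q, 4q is a cube in ℚ. -/
/-!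
Write `K = L(∛2)` with `L = ℚ(√3)(i) = ℚ(ζ₁₂)`. If `x ^ p = a` with `a` in a field `F` and `a` is
not a `p`-th power in `F`, then `Xᵖ - a` is the minimal polynomial of `x`, so `p` divides the degree
of every extension of `F` containing `x`. Both steps of `ℚ ⊂ ℚ(√3) ⊂ L` have degree at most 2, so
rational numbers (in particular `2`) that are cubes in `L` are cubes in `ℚ`; and `[K : L] = 3`, so
rationals that are squares in `K` are squares in `L`. What remains is a computation in coordinates:
for `w = a + b√d`, the `√d`-coordinate of `w²` is `2ab`; for `w = a + b∛d + c∛d²` the two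
non-constant coordinates of `w³` vanish only when two of `a, b, c` do.
-/

open Polynomial IntermediateField Module

section PureExtension

variable {F E : Type*} [Field F] [Field E] [Algebra F E]

theorem isIntegral_of_pow_eq_algebraMap {n : ℕ} (hn : n ≠ 0) {t : E} {d : F}
    (ht : t ^ n = algebraMap F E d) : IsIntegral F t :=
  IsIntegral.of_pow (Nat.pos_of_ne_zero hn) (ht ▸ isIntegral_algebraMap)

theorem minpoly_eq_X_pow_sub_C {p : ℕ} (hp : p.Prime) {t : E} {d : F}
    (ht : t ^ p = algebraMap F E d) (hd : ∀ z : F, z ^ p ≠ d) :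
    minpoly F t = X ^ p - C d :=
  (minpoly.eq_of_irreducible_of_monic (X_pow_sub_C_irreducible_of_prime hp hd)
    (by simp [ht]) (monic_X_pow_sub_C d hp.ne_zero)).symm

theorem exists_pow_eq_of_not_dvd_finrank {p : ℕ} (hp : p.Prime) (h : ¬ p ∣ finrank F E)
    {x : E} {a : F} (hx : x ^ p = algebraMap F E a) : ∃ z : F, z ^ p = a := by
  by_contra! hna
  apply h
  simpa [minpoly_eq_X_pow_sub_C hp hx hna] using
    minpoly.degree_dvd (isIntegral_of_pow_eq_algebraMap hp.ne_zero hx)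

theorem exists_pow_eq_of_mem_adjoin {p : ℕ} (hp : p.Prime) {t : E} (ht : IsIntegral F t)
    (hdeg : ¬ p ∣ (minpoly F t).natDegree) {w : E} (hw : w ∈ F⟮t⟯) {a : F}
    (ha : w ^ p = algebraMap F E a) : ∃ z : F, z ^ p = a :=
  exists_pow_eq_of_not_dvd_finrank (E := F⟮t⟯) hp (by rwa [adjoin.finrank ht])
    (x := ⟨w, hw⟩) (Subtype.ext ha)

theorem not_three_dvd_natDegree_minpoly {t : E} {d : F} (ht : t ^ 2 = algebraMap F E d) :
    ¬ 3 ∣ (minpoly F t).natDegree := by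
  have hpos := minpoly.natDegree_pos (isIntegral_of_pow_eq_algebraMap two_ne_zero ht)
  have hle : (minpoly F t).natDegree ≤ 2 := by
    have := minpoly.degree_le_of_ne_zero F t (X_pow_sub_C_ne_zero two_pos d) (by simp [ht])
    rw [degree_X_pow_sub_C two_pos] at this
    exact natDegree_le_iff_degree_le.mpr this
  omega

theorem exists_eq_sum_of_mem_adjoin {n : ℕ} (hn : n ≠ 0) {t : E} {d : F}
    (ht : t ^ n = algebraMap F E d) {w : E} (hw : w ∈ F⟮t⟯) :
    ∃ f : ℕ → F, w = ∑ i ∈ Finset.range n, f i • t ^ i := by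
  have hmonic := monic_X_pow_sub_C d hn
  have hroot : aeval t (X ^ n - C d) = 0 := by simp [ht]
  rw [← mem_toSubalgebra, adjoin_simple_toSubalgebra_of_isAlgebraic
    (isIntegral_of_pow_eq_algebraMap hn ht).isAlgebraic,
    Algebra.adjoin_singleton_eq_range_aeval] at hw
  obtain ⟨f, rfl⟩ := hw
  have hne : X ^ n - C d ≠ 1 := fun h ↦ hn (by simpa using congrArg natDegree h)
  refine ⟨(f %ₘ (X ^ n - C d)).coeff, ?_⟩
  rw [AlgHom.toRingHom_eq_coe, RingHom.coe_coe, ← aeval_modByMonic_eq_self_of_root hroot]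
  exact aeval_eq_sum_range' (by simpa using natDegree_modByMonic_lt f hmonic hne) t

theorem exists_sq_eq_or_sq_eq_mul_of_mem_adjoin (h2 : (2 : F) ≠ 0) {s : E} {d : F}
    (hs : s ^ 2 = algebraMap F E d) {w : E} (hw : w ∈ F⟮s⟯) {c : F}
    (hc : w ^ 2 = algebraMap F E c) : ∃ z : F, z ^ 2 = c ∨ z ^ 2 = c * d := by
  obtain ⟨f, rfl⟩ := exists_eq_sum_of_mem_adjoin two_ne_zero hs hw
  simp only [Finset.sum_range_succ, Finset.sum_range_zero, pow_zero, pow_one, zero_add,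
    Algebra.smul_def, mul_one] at hc
  set a := f 0
  set b := f 1
  have hinj := (algebraMap F E).injective
  have hlin : algebraMap F E (2 * a * b) * s = algebraMap F E (c - a ^ 2 - b ^ 2 * d) := by
    simp only [map_mul, map_sub, map_pow, map_ofNat]
    linear_combination hc - algebraMap F E b ^ 2 * hs
  -- if `a * b ≠ 0`, `hlin` puts `s` in `F`, hence `w` too
  by_cases hab : a * b = 0
  · rcases mul_eq_zero.mp hab with ha | hb
    · refine ⟨b * d, Or.inr (hinj ?_)⟩
      rw [ha] at hlin
      simp only [map_mul, map_pow, map_sub, map_zero] at hlin ⊢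
      linear_combination algebraMap F E d * hlin
    · refine ⟨a, Or.inl (hinj ?_)⟩
      rw [hb] at hlin
      simp only [map_mul, map_pow, map_sub, map_zero] at hlin ⊢
      linear_combination hlin
  · have h2ab : 2 * a * b ≠ 0 := by rw [mul_assoc]; exact mul_ne_zero h2 hab
    set e := (c - a ^ 2 - b ^ 2 * d) / (2 * a * b)
    have hse : s = algebraMap F E e := by
      rw [map_div₀, ← hlin, mul_div_cancel_left₀ _ ((_root_.map_ne_zero _).mpr h2ab)]
    refine ⟨a + b * e, Or.inl (hinj ?_)⟩
    rw [← hc, hse]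
    simp only [map_add, map_mul, map_pow]

theorem natDegree_minpoly_eq_of_pow_eq {p : ℕ} (hp : p.Prime) {t : E} {d : F}
    (ht : t ^ p = algebraMap F E d) (hd : ∀ z : F, z ^ p ≠ d) :
    (minpoly F t).natDegree = p := by
  rw [minpoly_eq_X_pow_sub_C hp ht hd, natDegree_X_pow_sub_C]

theorem eq_zero_of_add_mul_add_mul_sq_eq_zero {t : E} {d : F}
    (ht : t ^ 3 = algebraMap F E d) (hd : ∀ z : F, z ^ 3 ≠ d) {a b c : F}
    (h : algebraMap F E a + algebraMap F E b * t + algebraMap F E c * t ^ 2 = 0) :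
    a = 0 ∧ b = 0 ∧ c = 0 := by
  have hli := linearIndependent_pow (K := F) t
  rw [natDegree_minpoly_eq_of_pow_eq Nat.prime_three ht hd, Fintype.linearIndependent_iff] at hli
  have := hli ![a, b, c] (by simpa [Fin.sum_univ_three, Algebra.smul_def] using h)
  exact ⟨this 0, this 1, this 2⟩

theorem two_coords_eq_zero {d : F} (hd : ∀ z : F, z ^ 3 ≠ d) {a b c : F}
    (h₁ : a ^ 2 * b + d * a * c ^ 2 + d * b ^ 2 * c = 0)
    (h₂ : a ^ 2 * c + a * b ^ 2 + d * b * c ^ 2 = 0) :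
    b = 0 ∧ c = 0 ∨ a = 0 ∧ b = 0 ∨ a = 0 ∧ c = 0 := by
  have hd0 : d ≠ 0 := fun h ↦ hd 0 (by simp [h])
  by_cases ha : a = 0
  · subst ha
    have : d * b ^ 2 * c = 0 := by linear_combination h₁
    simp only [mul_eq_zero, hd0, false_or, pow_eq_zero_iff two_ne_zero] at this
    tauto
  · have hbc : b ^ 3 = d * c ^ 3 := by
      have : a * (d * c ^ 3 - b ^ 3) = 0 := by linear_combination c * h₁ - b * h₂
      linear_combination -(mul_eq_zero.mp this).resolve_left ha
    obtain rfl : c = 0 := by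
      by_contra hc
      exact hd (b / c) (by field_simp; linear_combination hbc)
    exact Or.inl ⟨pow_eq_zero_iff three_ne_zero |>.mp (by simpa using hbc), rfl⟩

theorem exists_cube_eq_of_mem_adjoin (h3 : (3 : F) ≠ 0) {t : E} {d : F}
    (ht : t ^ 3 = algebraMap F E d) (hd : ∀ z : F, z ^ 3 ≠ d) {w : E} (hw : w ∈ F⟮t⟯) {c : F}
    (hc : w ^ 3 = algebraMap F E c) :
    ∃ z : F, z ^ 3 = c ∨ d * z ^ 3 = c ∨ d ^ 2 * z ^ 3 = c := by
  obtain ⟨f, rfl⟩ := exists_eq_sum_of_mem_adjoin three_ne_zero ht hw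
  simp only [Finset.sum_range_succ, Finset.sum_range_zero, pow_zero, pow_one, zero_add,
    Algebra.smul_def, mul_one] at hc
  generalize f 0 = a, f 1 = b, f 2 = c' at hc
  obtain ⟨e₀, e₁, e₂⟩ := eq_zero_of_add_mul_add_mul_sq_eq_zero ht hd
    (a := a ^ 3 + d * b ^ 3 + d ^ 2 * c' ^ 3 + 6 * d * a * b * c' - c)
    (b := 3 * (a ^ 2 * b + d * a * c' ^ 2 + d * b ^ 2 * c'))
    (c := 3 * (a ^ 2 * c' + a * b ^ 2 + d * b * c' ^ 2)) (by
      simp only [map_add, map_sub, map_mul, map_pow, map_ofNat]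
      set A := algebraMap F E a
      set B := algebraMap F E b
      set C := algebraMap F E c'
      linear_combination hc - (B ^ 3 + 6 * A * B * C + (3 * B ^ 2 * C + 3 * A * C ^ 2) * t
        + 3 * B * C ^ 2 * t ^ 2 + C ^ 3 * (t ^ 3 + algebraMap F E d)) * ht)
  rcases two_coords_eq_zero hd ((mul_eq_zero.mp e₁).resolve_left h3)
    ((mul_eq_zero.mp e₂).resolve_left h3) with ⟨rfl, rfl⟩ | ⟨rfl, rfl⟩ | ⟨rfl, rfl⟩
  exacts [⟨a, Or.inl (by linear_combination e₀)⟩,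
    ⟨c', Or.inr (Or.inr (by linear_combination e₀))⟩,
    ⟨b, Or.inr (Or.inl (by linear_combination e₀))⟩]

end PureExtension

noncomputable section

def sqrtThree : ℂ := ((√3 : ℝ) : ℂ)

def cbrtTwo : ℂ := (((2 : ℝ) ^ ((1 : ℝ) / 3) : ℝ) : ℂ)

def zetaTwelve : ℂ := Complex.exp (2 * (Real.pi : ℂ) * Complex.I / 12)

def ratSqrtThree : IntermediateField ℚ ℂ := ℚ⟮sqrtThree⟯

/-- `ℚ(√3)(i) = ℚ(ζ₁₂)`, built as a tower over `ℚ(√3)`. -/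
def ratZetaTwelve : IntermediateField ratSqrtThree ℂ := ratSqrtThree⟮Complex.I⟯

end

theorem sqrtThree_sq : sqrtThree ^ 2 = 3 := by
  rw [sqrtThree, ← Complex.ofReal_pow, Real.sq_sqrt (by norm_num)]
  norm_num

theorem sqrtThree_sq_eq_algebraMap : sqrtThree ^ 2 = algebraMap ℚ ℂ 3 := by
  rw [sqrtThree_sq, map_ofNat]

theorem cbrtTwo_pow_three : cbrtTwo ^ 3 = 2 := by
  rw [cbrtTwo, ← Complex.ofReal_pow, ← Real.rpow_natCast, ← Real.rpow_mul (by norm_num)]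
  norm_num

theorem zetaTwelve_eq : zetaTwelve = (sqrtThree + Complex.I) / 2 := by
  have : 2 * (Real.pi : ℂ) * Complex.I / 12 = ((Real.pi / 6 : ℝ) : ℂ) * Complex.I := by
    push_cast; ring
  rw [zetaTwelve, this, Complex.exp_mul_I, ← Complex.ofReal_cos, ← Complex.ofReal_sin,
    Real.cos_pi_div_six, Real.sin_pi_div_six, sqrtThree]
  push_cast
  ring

theorem zetaTwelve_pow_three : zetaTwelve ^ 3 = Complex.I := by
  rw [zetaTwelve_eq]
  linear_combination (sqrtThree / 8 + 3 * Complex.I / 8) * sqrtThree_sq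
    + (3 * sqrtThree / 8 + Complex.I / 8) * Complex.I_sq

theorem rat_pow_three_ne_two (z : ℚ) : z ^ 3 ≠ 2 := by
  intro h
  have := congrArg (padicValRat 2) h
  have h2 : padicValRat 2 2 = 1 := by exact_mod_cast padicValRat.self (p := 2) one_lt_two
  rw [padicValRat.pow, h2] at this
  omega

theorem I_sq_eq_algebraMap : Complex.I ^ 2 = algebraMap ratSqrtThree ℂ (-1) := by
  simp

theorem exists_rat_pow_three_eq_of_mem_ratZetaTwelve {w : ℂ} (hw : w ∈ ratZetaTwelve) {r : ℚ}
    (h : w ^ 3 = r) : ∃ z : ℚ, z ^ 3 = r := by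
  obtain ⟨u, hu⟩ := exists_pow_eq_of_mem_adjoin Nat.prime_three
    (isIntegral_of_pow_eq_algebraMap two_ne_zero I_sq_eq_algebraMap)
    (not_three_dvd_natDegree_minpoly I_sq_eq_algebraMap) hw (a := (r : ratSqrtThree))
    (by rw [map_ratCast, h])
  exact exists_pow_eq_of_mem_adjoin Nat.prime_three
    (isIntegral_of_pow_eq_algebraMap two_ne_zero sqrtThree_sq_eq_algebraMap)
    (not_three_dvd_natDegree_minpoly sqrtThree_sq_eq_algebraMap)
    u.2 (by rw [eq_ratCast, ← IntermediateField.coe_pow, hu]; simp)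

theorem pow_three_ne_two_of_ratZetaTwelve (z : ratZetaTwelve) : z ^ 3 ≠ 2 := fun h ↦ by
  obtain ⟨r, hr⟩ := exists_rat_pow_three_eq_of_mem_ratZetaTwelve z.2 (r := 2)
    (by rw [← IntermediateField.coe_pow, h]; rfl)
  exact rat_pow_three_ne_two r hr

theorem exists_rat_sq_eq_of_mem_ratZetaTwelve {w : ℂ} (hw : w ∈ ratZetaTwelve) {r : ℚ}
    (h : w ^ 2 = r) :
    (∃ z : ℚ, z ^ 2 = r) ∨ (∃ z : ℚ, z ^ 2 = -r) ∨
      (∃ z : ℚ, z ^ 2 = 3 * r) ∨ (∃ z : ℚ, z ^ 2 = -3 * r) := by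
  obtain ⟨u, hu | hu⟩ := exists_sq_eq_or_sq_eq_mul_of_mem_adjoin two_ne_zero
    I_sq_eq_algebraMap hw (c := (r : ratSqrtThree)) (by rw [map_ratCast, h])
  · obtain ⟨z, hz | hz⟩ := exists_sq_eq_or_sq_eq_mul_of_mem_adjoin two_ne_zero
      sqrtThree_sq_eq_algebraMap u.2 (c := r)
      (by rw [eq_ratCast, ← IntermediateField.coe_pow, hu]; simp)
    exacts [Or.inl ⟨z, hz⟩, Or.inr (Or.inr (Or.inl ⟨z, by rw [hz, mul_comm]⟩))]
  · obtain ⟨z, hz | hz⟩ := exists_sq_eq_or_sq_eq_mul_of_mem_adjoin two_ne_zero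
      sqrtThree_sq_eq_algebraMap u.2 (c := -r)
      (by rw [eq_ratCast, ← IntermediateField.coe_pow, hu]; simp)
    exacts [Or.inr (Or.inl ⟨z, hz⟩), Or.inr (Or.inr (Or.inr ⟨z, by rw [hz]; ring⟩))]

theorem mem_adjoin_cbrtTwo_of_mem {x : ℂ} (hx : x ∈ ratZetaTwelve) :
    x ∈ ratZetaTwelve⟮cbrtTwo⟯ := by
  simpa using IntermediateField.algebraMap_mem (ratZetaTwelve⟮cbrtTwo⟯) (⟨x, hx⟩ : ratZetaTwelve)

theorem sqrtThree_mem_ratZetaTwelve : sqrtThree ∈ ratZetaTwelve := by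
  simpa using IntermediateField.algebraMap_mem ratZetaTwelve
    (⟨sqrtThree, mem_adjoin_simple_self _ _⟩ : ratSqrtThree)

theorem adjoin_zetaTwelve_cbrtTwo_le :
    ℚ⟮zetaTwelve, cbrtTwo⟯ ≤ (ratZetaTwelve⟮cbrtTwo⟯).restrictScalars ℚ := by
  rw [adjoin_le_iff, Set.insert_subset_iff, Set.singleton_subset_iff, SetLike.mem_coe,
    SetLike.mem_coe, mem_restrictScalars, mem_restrictScalars]
  refine ⟨?_, mem_adjoin_simple_self _ _⟩
  rw [zetaTwelve_eq]
  exact div_mem (add_mem (mem_adjoin_cbrtTwo_of_mem sqrtThree_mem_ratZetaTwelve)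
    (mem_adjoin_cbrtTwo_of_mem (mem_adjoin_simple_self _ _))) (ofNat_mem _ 2)

theorem cbrtTwo_pow_three_eq_algebraMap : cbrtTwo ^ 3 = algebraMap ratZetaTwelve ℂ 2 := by
  rw [cbrtTwo_pow_three, map_ofNat]

theorem not_two_dvd_natDegree_minpoly_cbrtTwo :
    ¬ 2 ∣ (minpoly ratZetaTwelve cbrtTwo).natDegree := by
  rw [natDegree_minpoly_eq_of_pow_eq Nat.prime_three cbrtTwo_pow_three_eq_algebraMap
    pow_three_ne_two_of_ratZetaTwelve]
  decide

theorem I_mem_adjoin : Complex.I ∈ ℚ⟮zetaTwelve, cbrtTwo⟯ :=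
  zetaTwelve_pow_three ▸ pow_mem (subset_adjoin _ _ (Set.mem_insert _ _)) 3

theorem sqrtThree_mem_adjoin : sqrtThree ∈ ℚ⟮zetaTwelve, cbrtTwo⟯ := by
  have h : sqrtThree = 2 * zetaTwelve - Complex.I := by rw [zetaTwelve_eq]; ring
  exact h ▸ sub_mem (mul_mem (ofNat_mem _ 2) (subset_adjoin _ _ (Set.mem_insert _ _)))
    I_mem_adjoin

theorem cbrtTwo_mem_adjoin : cbrtTwo ∈ ℚ⟮zetaTwelve, cbrtTwo⟯ :=
  subset_adjoin _ _ (Set.mem_insert_of_mem _ rfl)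

theorem exists_sq_eq_iff (q : ℚ) :
    (∃ y ∈ ℚ⟮zetaTwelve, cbrtTwo⟯, y ^ 2 = (q : ℂ)) ↔
      ((∃ z : ℚ, z ^ 2 = q) ∨ (∃ z : ℚ, z ^ 2 = -q) ∨
       (∃ z : ℚ, z ^ 2 = 3 * q) ∨ (∃ z : ℚ, z ^ 2 = -3 * q)) := by
  constructor
  · rintro ⟨y, hy, h⟩
    obtain ⟨z, hz⟩ := exists_pow_eq_of_mem_adjoin Nat.prime_two
      (isIntegral_of_pow_eq_algebraMap three_ne_zero cbrtTwo_pow_three_eq_algebraMap)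
      not_two_dvd_natDegree_minpoly_cbrtTwo (adjoin_zetaTwelve_cbrtTwo_le hy)
      (a := (q : ratZetaTwelve)) (by rw [map_ratCast, h])
    exact exists_rat_sq_eq_of_mem_ratZetaTwelve z.2
      (by rw [← IntermediateField.coe_pow, hz]; rfl)
  · rintro (⟨z, hz⟩ | ⟨z, hz⟩ | ⟨z, hz⟩ | ⟨z, hz⟩) <;>
      replace hz := congrArg ((↑) : ℚ → ℂ) hz <;> push_cast at hz
    · exact ⟨z, SubfieldClass.ratCast_mem _ z, hz⟩
    · refine ⟨z * Complex.I, mul_mem (SubfieldClass.ratCast_mem _ z) I_mem_adjoin, ?_⟩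
      linear_combination (z : ℂ) ^ 2 * Complex.I_sq - hz
    · refine ⟨z / sqrtThree, div_mem (SubfieldClass.ratCast_mem _ z) sqrtThree_mem_adjoin, ?_⟩
      rw [div_pow, sqrtThree_sq, hz]
      ring
    · refine ⟨z * Complex.I / sqrtThree,
        div_mem (mul_mem (SubfieldClass.ratCast_mem _ z) I_mem_adjoin) sqrtThree_mem_adjoin, ?_⟩
      rw [div_pow, mul_pow, sqrtThree_sq, Complex.I_sq, hz]
      ring

theorem exists_pow_three_eq_iff (q : ℚ) :
    (∃ y ∈ ℚ⟮zetaTwelve, cbrtTwo⟯, y ^ 3 = (q : ℂ)) ↔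
      ((∃ z : ℚ, z ^ 3 = q) ∨ (∃ z : ℚ, z ^ 3 = 2 * q) ∨ (∃ z : ℚ, z ^ 3 = 4 * q)) := by
  constructor
  · rintro ⟨y, hy, h⟩
    have h2 : ((2 : ratZetaTwelve) : ℂ) = 2 := rfl
    obtain ⟨z, hz | hz | hz⟩ := exists_cube_eq_of_mem_adjoin three_ne_zero
      cbrtTwo_pow_three_eq_algebraMap pow_three_ne_two_of_ratZetaTwelve
      (adjoin_zetaTwelve_cbrtTwo_le hy) (c := (q : ratZetaTwelve)) (by rw [map_ratCast, h])
    all_goals replace hz := congrArg ((↑) : ratZetaTwelve → ℂ) hz; push_cast [h2] at hz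
    · exact Or.inl (exists_rat_pow_three_eq_of_mem_ratZetaTwelve z.2 hz)
    · obtain ⟨r, hr⟩ := exists_rat_pow_three_eq_of_mem_ratZetaTwelve z.2 (r := q / 2)
        (by push_cast; linear_combination hz / 2)
      exact Or.inr (Or.inr ⟨2 * r, by linear_combination 8 * hr⟩)
    · obtain ⟨r, hr⟩ := exists_rat_pow_three_eq_of_mem_ratZetaTwelve z.2 (r := q / 4)
        (by push_cast; linear_combination hz / 4)
      exact Or.inr (Or.inl ⟨2 * r, by linear_combination 8 * hr⟩)
  · rintro (⟨z, hz⟩ | ⟨z, hz⟩ | ⟨z, hz⟩) <;> replace hz := congrArg ((↑) : ℚ → ℂ) hz <;>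
      push_cast at hz
    · exact ⟨z, SubfieldClass.ratCast_mem _ z, hz⟩
    · refine ⟨z / cbrtTwo, div_mem (SubfieldClass.ratCast_mem _ z) cbrtTwo_mem_adjoin, ?_⟩
      rw [div_pow, cbrtTwo_pow_three, hz]
      ring
    · refine ⟨z / cbrtTwo ^ 2,
        div_mem (SubfieldClass.ratCast_mem _ z) (pow_mem cbrtTwo_mem_adjoin 2), ?_⟩
      rw [div_pow, ← pow_mul, show 2 * 3 = 3 * 2 from rfl, pow_mul, cbrtTwo_pow_three, hz]
      ring

theorem stmt_12_general (K : IntermediateField ℚ ℂ)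
    (hK : K = IntermediateField.adjoin ℚ
      ({Complex.exp (2 * (Real.pi : ℂ) * Complex.I / 12),
        (((2 : ℝ) ^ ((1 : ℝ) / 3) : ℝ) : ℂ)} : Set ℂ))
    (q : ℚ) :
    ((∃ y ∈ K, y ^ 2 = (q : ℂ)) ↔
      ((∃ z : ℚ, z ^ 2 = q) ∨ (∃ z : ℚ, z ^ 2 = -q) ∨
       (∃ z : ℚ, z ^ 2 = 3 * q) ∨ (∃ z : ℚ, z ^ 2 = -3 * q))) ∧
    ((∃ y ∈ K, y ^ 3 = (q : ℂ)) ↔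
      ((∃ z : ℚ, z ^ 3 = q) ∨ (∃ z : ℚ, z ^ 3 = 2 * q) ∨ (∃ z : ℚ, z ^ 3 = 4 * q))) := by
  subst hK
  exact ⟨exists_sq_eq_iff q, exists_pow_three_eq_iff q⟩

/-- Let `K = ℚ(ζ₁₂, ∛2) ⊂ ℂ`. A nonzero rational `q` is:
(i) a square in `K` iff one of `q, −q, 3q, −3q` is a square in `ℚ`;
(ii) a cube in `K` iff one of `q, 2q, 4q` is a cube in `ℚ`. -/
theorem stmt_12 (K : IntermediateField ℚ ℂ)
    (hK : K = IntermediateField.adjoin ℚ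
      ({Complex.exp (2 * (Real.pi : ℂ) * Complex.I / 12),
        (((2 : ℝ) ^ ((1 : ℝ) / 3) : ℝ) : ℂ)} : Set ℂ))
    (q : ℚ) (hq : q ≠ 0) :
    ((∃ y ∈ K, y ^ 2 = (q : ℂ)) ↔
      ((∃ z : ℚ, z ^ 2 = q) ∨ (∃ z : ℚ, z ^ 2 = -q) ∨
       (∃ z : ℚ, z ^ 2 = 3 * q) ∨ (∃ z : ℚ, z ^ 2 = -3 * q))) ∧
    ((∃ y ∈ K, y ^ 3 = (q : ℂ)) ↔
      ((∃ z : ℚ, z ^ 3 = q) ∨ (∃ z : ℚ, z ^ 3 = 2 * q) ∨ (∃ z : ℚ, z ^ 3 = 4 * q))) :=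
  stmt_12_general K hK q
end

section
/- Let α be an integer, let d be a positive integer, and let d₁, …, dₙ be positive integers. For every ε > 0 there exists a constant C (depending on α, d, the dᵢ and ε) such that for all real T ≥ 1, the number of tuples (a₁, …, aₙ) ∈ ℤⁿ with 0 < |aᵢ| ≤ T for all i and with α·a₁^{d₁}⋯aₙ^{dₙ} equal to bᵈ for some nonzero rational number b, is at most C · T^{(d₁ + ⋯ + dₙ)/d + ε}. -/
/-!
If `α · ∏ aᵢ ^ dᵢ = b ^ d` with `b` rational, then `b = k` is an integer with
`|k| ^ d ≤ |α| · T ^ D`, where `D = ∑ dᵢ`, and every `aᵢ` divides `k ^ d`. So there are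
`O(T ^ (D / d))` choices of `k`, and for each of them at most `τ(k ^ d) ^ n` tuples, where
`τ(z)` counts the integer divisors of `z`. The divisor bound `τ(m) ≪_δ m ^ δ` makes the latter
factor `O(T ^ ε)`.
-/

open Finset

theorem add_one_le_mul_pow {y : ℝ} (hy : 1 < y) :
    ∃ C : ℝ, 1 ≤ C ∧ ∀ e : ℕ, (e + 1 : ℝ) ≤ C * y ^ e := by
  have hδ : 0 < y - 1 := sub_pos.2 hy
  refine ⟨max 1 (y - 1)⁻¹, le_max_left _ _, fun e => ?_⟩
  have hCδ : 1 ≤ max 1 (y - 1)⁻¹ * (y - 1) :=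
    calc (1 : ℝ) = (y - 1)⁻¹ * (y - 1) := (inv_mul_cancel₀ hδ.ne').symm
      _ ≤ max 1 (y - 1)⁻¹ * (y - 1) := by gcongr; exact le_max_right _ _
  have hbernoulli : 1 + e * (y - 1) ≤ y ^ e := by
    simpa using one_add_mul_le_pow (by linarith : (-2 : ℝ) ≤ y - 1) e
  calc (e + 1 : ℝ) ≤ max 1 (y - 1)⁻¹ * (1 + e * (y - 1)) := by
        nlinarith [le_max_left 1 (y - 1)⁻¹, (Nat.cast_nonneg e : (0 : ℝ) ≤ e)]
    _ ≤ max 1 (y - 1)⁻¹ * y ^ e := by gcongr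

theorem Nat.card_divisors_le_prod_mul_rpow {ε : ℝ} (c : ℕ → ℝ)
    (hc : ∀ p e : ℕ, p.Prime → (e + 1 : ℝ) ≤ c p * ((p : ℝ) ^ ε) ^ e) {m : ℕ} (hm : m ≠ 0) :
    (#m.divisors : ℝ) ≤ (∏ p ∈ m.primeFactors, c p) * (m : ℝ) ^ ε := by
  have hm_eq : (m : ℝ) ^ ε = ∏ p ∈ m.primeFactors, ((p : ℝ) ^ ε) ^ m.factorization p := by
    conv_lhs => rw [Nat.prod_primeFactors_pow_factorization hm]
    push_cast
    rw [← Real.finsetProd_rpow _ _ fun _ _ => by positivity]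
    exact prod_congr rfl fun p _ => (Real.rpow_pow_comm (Nat.cast_nonneg p) ε _).symm
  rw [Nat.card_divisors hm, hm_eq, ← prod_mul_distrib]
  push_cast
  exact prod_le_prod (fun _ _ => by positivity) fun p hp =>
    hc p _ (Nat.prime_of_mem_primeFactors hp)

theorem Nat.card_divisors_le_mul_rpow {ε : ℝ} (hε : 0 < ε) :
    ∃ C : ℝ, 0 < C ∧ ∀ m : ℕ, m ≠ 0 → (#m.divisors : ℝ) ≤ C * (m : ℝ) ^ ε := by
  obtain ⟨C₀, hC₀, hC₀e⟩ := add_one_le_mul_pow (Real.one_lt_rpow one_lt_two hε)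
  set N := ⌈(2 : ℝ) ^ ε⁻¹⌉₊
  refine ⟨C₀ ^ (N + 1), by positivity, fun m hm => ?_⟩
  -- Primes `p ≤ N` cost a factor `C₀` each; beyond `N` we have `p ^ ε ≥ 2` and `e + 1 ≤ 2 ^ e`.
  have hc : ∀ p e : ℕ, p.Prime →
      (e + 1 : ℝ) ≤ (if p ≤ N then C₀ else 1) * ((p : ℝ) ^ ε) ^ e := by
    intro p e hp
    split_ifs with hpN
    · calc (e + 1 : ℝ) ≤ C₀ * ((2 : ℝ) ^ ε) ^ e := hC₀e e
        _ ≤ C₀ * ((p : ℝ) ^ ε) ^ e := by gcongr; exact_mod_cast hp.two_le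
    · have hp_large : (2 : ℝ) ^ ε⁻¹ ≤ p :=
        (Nat.le_ceil _).trans (by exact_mod_cast (not_le.1 hpN).le)
      have h2 : (2 : ℝ) ≤ (p : ℝ) ^ ε := by
        calc (2 : ℝ) = ((2 : ℝ) ^ ε⁻¹) ^ ε := (Real.rpow_inv_rpow zero_le_two hε.ne').symm
          _ ≤ (p : ℝ) ^ ε := by gcongr
      calc (e + 1 : ℝ) ≤ 2 ^ e := by exact_mod_cast Nat.lt_two_pow_self
        _ ≤ ((p : ℝ) ^ ε) ^ e := by gcongr
        _ = 1 * ((p : ℝ) ^ ε) ^ e := (one_mul _).symm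
  refine (Nat.card_divisors_le_prod_mul_rpow _ hc hm).trans ?_
  gcongr
  rw [prod_ite, prod_const, prod_const, one_pow, mul_one]
  refine pow_le_pow_right₀ hC₀ ((card_le_card fun p hp => ?_).trans (card_range (N + 1)).le)
  simp only [mem_filter, mem_range] at hp ⊢
  omega

theorem Int.card_divisors (z : ℤ) : #z.divisors = 2 * #z.natAbs.divisors := by
  rw [Int.divisors, card_disjUnion, card_map, card_map, two_mul]

theorem Int.card_divisors_le_mul_rpow {ε : ℝ} (hε : 0 < ε) :
    ∃ C : ℝ, 0 < C ∧ ∀ z : ℤ, (#z.divisors : ℝ) ≤ C * |(z : ℝ)| ^ ε := by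
  obtain ⟨C, hC, hbound⟩ := Nat.card_divisors_le_mul_rpow hε
  refine ⟨2 * C, by positivity, fun z => ?_⟩
  rcases eq_or_ne z 0 with rfl | hz
  · simp [Real.zero_rpow hε.ne']
  rw [Int.card_divisors, Nat.cast_mul, Nat.cast_two, mul_assoc, ← Int.cast_abs, ← Nat.cast_natAbs]
  gcongr
  exact hbound _ (Int.natAbs_ne_zero.2 hz)

theorem Rat.exists_eq_intCast_of_pow_eq_intCast {b : ℚ} {z : ℤ} {d : ℕ} (hd : d ≠ 0)
    (h : b ^ d = z) : ∃ k : ℤ, b = k := by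
  have hden : b.den = 1 := by
    have := congrArg Rat.den h
    rw [Rat.den_pow, Rat.den_intCast, Nat.pow_eq_one] at this
    exact this.resolve_right hd
  exact ⟨b.num, (Rat.coe_int_num_of_den_eq_one hden).symm⟩

theorem abs_prod_pow_le {ι R : Type*} [CommRing R] [LinearOrder R] [IsStrictOrderedRing R]
    (s : Finset ι) (x : ι → R) (e : ι → ℕ) {T : R} (hx : ∀ i ∈ s, |x i| ≤ T) :
    |∏ i ∈ s, x i ^ e i| ≤ T ^ ∑ i ∈ s, e i := by
  rw [abs_prod, ← prod_pow_eq_pow_sum]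
  exact prod_le_prod (fun _ _ => abs_nonneg _) fun i hi => by
    rw [abs_pow]; exact pow_le_pow_left₀ (abs_nonneg _) (hx i hi) _

theorem dvd_mul_prod_pow {ι R : Type*} [CommMonoid R] (α : R) {s : Finset ι} (x : ι → R)
    {e : ι → ℕ} {i : ι} (hi : i ∈ s) (he : e i ≠ 0) : x i ∣ α * ∏ j ∈ s, x j ^ e j :=
  ((dvd_pow_self _ he).trans (dvd_prod_of_mem (fun j => x j ^ e j) hi)).mul_left α

theorem Int.natAbs_le_floor_rpow_inv_iff {X : ℝ} (hX : 0 ≤ X) {d : ℕ} (hd : d ≠ 0) (k : ℤ) :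
    k.natAbs ≤ ⌊X ^ (d : ℝ)⁻¹⌋₊ ↔ |(k : ℝ)| ^ d ≤ X := by
  rw [Nat.le_floor_iff (by positivity), Nat.cast_natAbs, Int.cast_abs,
    Real.le_rpow_inv_iff_of_pos (abs_nonneg _) hX (by positivity), Real.rpow_natCast]

theorem exists_int_root_of_mul_prod_pow_eq_pow {ι : Type*} [Fintype ι] {d : ℕ} (hd : d ≠ 0)
    {α : ℤ} {e : ι → ℕ} (he : ∀ i, e i ≠ 0) {a : ι → ℤ} {T : ℝ} (haT : ∀ i, |(a i : ℝ)| ≤ T)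
    {b : ℚ} (hb0 : b ≠ 0) (hb : α * ∏ i, (a i : ℚ) ^ e i = b ^ d) :
    ∃ k : ℤ, |(k : ℝ)| ^ d ≤ |(α : ℝ)| * T ^ ∑ i, e i ∧ ∀ i, a i ∈ (k ^ d).divisors := by
  have hb_int : b ^ d = ((α * ∏ i, a i ^ e i : ℤ) : ℚ) := by push_cast; exact hb.symm
  obtain ⟨k, rfl⟩ := Rat.exists_eq_intCast_of_pow_eq_intCast hd hb_int
  have hk : k ^ d = α * ∏ i, a i ^ e i := by exact_mod_cast hb_int
  refine ⟨k, ?_, fun i => Int.mem_divisors.2 ⟨hk ▸ dvd_mul_prod_pow α a (mem_univ i) (he i), ?_⟩⟩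
  · have hkR : (k : ℝ) ^ d = α * ∏ i, (a i : ℝ) ^ e i := by exact_mod_cast hk
    rw [← abs_pow, hkR, abs_mul]
    gcongr
    exact abs_prod_pow_le _ _ _ fun i _ => haT i
  · exact pow_ne_zero d (by exact_mod_cast hb0)

theorem card_le_of_forall_mem_divisors_pow {ι : Type*} [Fintype ι] [DecidableEq ι] {d : ℕ}
    (hd : d ≠ 0) {X C δ : ℝ} (hX : 1 ≤ X) (hC : 0 ≤ C) (hδ : 0 ≤ δ)
    (hdiv : ∀ z : ℤ, (#z.divisors : ℝ) ≤ C * |(z : ℝ)| ^ δ) (S : Set (ι → ℤ))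
    (hS : ∀ a ∈ S, ∃ k : ℤ, |(k : ℝ)| ^ d ≤ X ∧ ∀ i, a i ∈ (k ^ d).divisors) :
    (Nat.card S : ℝ) ≤ 3 * X ^ (d : ℝ)⁻¹ * (C * X ^ δ) ^ Fintype.card ι := by
  set K := ⌊X ^ (d : ℝ)⁻¹⌋₊
  have hroot : ∀ k : ℤ, k ∈ Icc (-K : ℤ) K ↔ |(k : ℝ)| ^ d ≤ X := fun k => by
    rw [mem_Icc, ← abs_le, Int.abs_eq_natAbs, Nat.cast_le,
      Int.natAbs_le_floor_rpow_inv_iff (by linarith) hd]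
  have hsub : S ⊆ ↑((Icc (-K : ℤ) K).biUnion fun k =>
      Fintype.piFinset fun _ : ι => (k ^ d).divisors) :=
    fun a ha => by
      obtain ⟨k, hkX, hk⟩ := hS a ha
      exact mem_coe.2 (mem_biUnion.2 ⟨k, (hroot k).2 hkX, Fintype.mem_piFinset.2 hk⟩)
  have hfiber : ∀ k ∈ Icc (-K : ℤ) K, (#(k ^ d).divisors : ℝ) ≤ C * X ^ δ := fun k hk =>
    (hdiv _).trans <| by
      push_cast
      rw [abs_pow]
      gcongr
      exact (hroot k).1 hk
  have hK : (K : ℝ) ≤ X ^ (d : ℝ)⁻¹ := Nat.floor_le (by positivity)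
  have hX_root : 1 ≤ X ^ (d : ℝ)⁻¹ := Real.one_le_rpow hX (by positivity)
  calc (Nat.card S : ℝ)
      ≤ #((Icc (-K : ℤ) K).biUnion fun k => Fintype.piFinset fun _ => (k ^ d).divisors) := by
        rw [← Set.ncard_coe_finset, ← Nat.card_coe_set_eq]
        exact_mod_cast Nat.card_mono (finite_toSet _) hsub
    _ ≤ ∑ k ∈ Icc (-K : ℤ) K, (#(k ^ d).divisors : ℝ) ^ Fintype.card ι := by
        have hcard (k : ℤ) : #(Fintype.piFinset fun _ : ι => (k ^ d).divisors) =
            #(k ^ d).divisors ^ Fintype.card ι := by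
          rw [Fintype.card_piFinset, prod_const, card_univ]
        exact_mod_cast card_biUnion_le.trans (sum_le_sum fun k _ => (hcard k).le)
    _ ≤ ∑ k ∈ Icc (-K : ℤ) K, (C * X ^ δ) ^ Fintype.card ι :=
        sum_le_sum fun k hk => by gcongr; exact hfiber k hk
    _ = (2 * K + 1) * (C * X ^ δ) ^ Fintype.card ι := by
        rw [sum_const, Int.card_Icc, nsmul_eq_mul]
        congr 1
        rw [show (K : ℤ) + 1 - -K = ((2 * K + 1 : ℕ) : ℤ) by push_cast; ring, Int.toNat_natCast]
        push_cast; ring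
    _ ≤ 3 * X ^ (d : ℝ)⁻¹ * (C * X ^ δ) ^ Fintype.card ι := by gcongr; linarith

theorem rpow_inv_mul_pow_rpow_le {A T δ ε : ℝ} {D d n : ℕ} (hA : 0 < A) (hT : 1 ≤ T)
    (hδ : D * n * δ ≤ ε) :
    (A * T ^ D) ^ (d : ℝ)⁻¹ * ((A * T ^ D) ^ δ) ^ n ≤
      A ^ ((d : ℝ)⁻¹ + n * δ) * T ^ ((D : ℝ) / d + ε) := by
  have hT0 : 0 < T := by linarith
  rw [← Real.rpow_mul_natCast (by positivity), ← Real.rpow_add (by positivity),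
    Real.mul_rpow hA.le (by positivity), ← Real.rpow_natCast T D, ← Real.rpow_mul hT0.le,
    mul_comm δ]
  gcongr
  rw [mul_add, div_eq_mul_inv, ← mul_assoc]; linarith

/-- Let `α ∈ ℤ`, `d ≥ 1` and `d₁, …, dₙ ≥ 1`. For every `ε > 0` there is a
constant `C` such that for all `T ≥ 1`, the number of tuples `(a₁, …, aₙ) ∈ ℤⁿ`
with `0 < |aᵢ| ≤ T` and `α·a₁^{d₁}⋯aₙ^{dₙ}` a nonzero `d`-th power in `ℚ` is at
most `C · T^{(d₁+⋯+dₙ)/d + ε}`. -/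
theorem stmt_13 (n : ℕ) (α : ℤ) (d : ℕ) (hd : 0 < d) (ds : Fin n → ℕ)
    (hds : ∀ i, 0 < ds i) (ε : ℝ) (hε : 0 < ε) :
    ∃ C : ℝ, 0 < C ∧ ∀ T : ℝ, 1 ≤ T →
      (Nat.card {a : Fin n → ℤ // (∀ i, a i ≠ 0 ∧ (|a i| : ℝ) ≤ T) ∧
          ∃ b : ℚ, b ≠ 0 ∧ (α : ℚ) * ∏ i, (a i : ℚ) ^ (ds i) = b ^ d} : ℝ)
        ≤ C * T ^ ((∑ i, (ds i : ℝ)) / (d : ℝ) + ε) := by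
  set D := ∑ i, ds i
  -- `δ` is small enough that the `n` divisor-counting factors, each `≪ (T ^ D) ^ δ`, cost `T ^ ε`.
  set δ := ε / (D * n + 1)
  have hδ : 0 < δ := by positivity
  have hDδ : D * n * δ ≤ ε := by
    rw [mul_div_assoc', div_le_iff₀ (by positivity)]
    nlinarith
  obtain ⟨C, hC, hdiv⟩ := Int.card_divisors_le_mul_rpow hδ
  set A : ℝ := |(α : ℝ)| + 1
  refine ⟨3 * C ^ n * A ^ ((d : ℝ)⁻¹ + n * δ), by positivity, fun T hT => ?_⟩
  have hA : 0 < A := by positivity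
  have hX : 1 ≤ A * T ^ D := one_le_mul_of_one_le_of_one_le (by simp [A]) (one_le_pow₀ hT)
  calc _ ≤ 3 * (A * T ^ D) ^ (d : ℝ)⁻¹ * (C * (A * T ^ D) ^ δ) ^ Fintype.card (Fin n) := by
        refine card_le_of_forall_mem_divisors_pow hd.ne' hX hC.le hδ.le hdiv _ ?_
        rintro a ⟨ha, b, hb0, hb⟩
        obtain ⟨k, hkα, hk⟩ := exists_int_root_of_mul_prod_pow_eq_pow hd.ne'
          (fun i => (hds i).ne') (fun i => (ha i).2) hb0 hb
        exact ⟨k, hkα.trans (by gcongr; simp [A]), hk⟩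
    _ = 3 * C ^ n * ((A * T ^ D) ^ (d : ℝ)⁻¹ * ((A * T ^ D) ^ δ) ^ n) := by
        rw [Fintype.card_fin]; ring
    _ ≤ 3 * C ^ n * (A ^ ((d : ℝ)⁻¹ + n * δ) * T ^ ((D : ℝ) / d + ε)) :=
        mul_le_mul_of_nonneg_left (rpow_inv_mul_pow_rpow_le hA hT hDδ) (by positivity)
    _ = 3 * C ^ n * A ^ ((d : ℝ)⁻¹ + n * δ) * T ^ ((∑ i, (ds i : ℝ)) / d + ε) := by
        push_cast [D]; ring
end

section
/- Let G be a finite solvable group and let M be an abelian group equipped with an action of G by group automorphisms. Let G act on Hom(M, ℚ/ℤ) by (g·φ)(m) = φ(g⁻¹·m). Then the restriction map Hom(M, ℚ/ℤ) → Hom(M^G, ℚ/ℤ) is surjective, and its kernel is exactly the subgroup generated by all elements g·φ − φ with g ∈ G and φ ∈ Hom(M, ℚ/ℤ). In other words, the natural map from the coinvariants Hom(M, ℚ/ℤ)_G to Hom(M^G, ℚ/ℤ), sending the class of φ to φ restricted to M^G, is an isomorphism of abelian groups. -/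
/-- The subgroup of `G`-fixed points of an additive `G`-module `M`. -/
def fixedAddSubgroup (G M : Type*) [Group G] [AddCommGroup M]
    [DistribMulAction G M] : AddSubgroup M where
  carrier := {m : M | ∀ g : G, g • m = m}
  zero_mem' := fun g => smul_zero g
  add_mem' := fun {a b} ha hb g => by rw [smul_add, ha g, hb g]
  neg_mem' := fun {a} ha g => by rw [smul_neg, ha g]

/-!
The map `d : M → ∏_{g ∈ G} M`, `m ↦ (g • m - m)_g`, has kernel `M^G`. Since `ℚ/ℤ` is
injective, a character `φ` of `M` vanishing on `M^G` factors as `φ = ψ ∘ d`, and every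
character of `M^G` extends to `M`. For finite `G` the character `ψ` of the product splits
into characters `ψ_g` of the factors, so `φ = ∑_g (ψ_g ∘ g - ψ_g)`.
-/

open AddSubgroup

local notation "ℚ/ℤ" => ℚ ⧸ AddSubgroup.zmultiples (1 : ℚ)

theorem AddMonoidHom.exists_comp_eq_of_ker_le {M N : Type*} [AddCommGroup M] [AddCommGroup N]
    (f : M →+ N) (φ : M →+ ℚ/ℤ) (h : f.ker ≤ φ.ker) : ∃ ψ : N →+ ℚ/ℤ, ψ.comp f = φ := by
  obtain ⟨ψ, hψ⟩ := (Module.Baer.of_divisible _).extension_property_addMonoidHom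
    (QuotientAddGroup.kerLift f) (QuotientAddGroup.kerLift_injective f)
    (QuotientAddGroup.lift f.ker φ h)
  exact ⟨ψ, AddMonoidHom.ext fun m => DFunLike.congr_fun hψ (m : M ⧸ f.ker)⟩

section GroupAction

variable (G M A : Type*) [Group G] [AddCommGroup M] [DistribMulAction G M] [AddCommGroup A]

def coboundary₀ : M →+ (G → M) where
  toFun m g := g • m - m
  map_zero' := by ext; simp
  map_add' a b := by ext g; simp only [smul_add, Pi.add_apply]; abel

theorem ker_coboundary₀ : (coboundary₀ G M).ker = fixedAddSubgroup G M := by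
  ext m
  simp only [AddMonoidHom.mem_ker, funext_iff, coboundary₀, AddMonoidHom.coe_mk,
    ZeroHom.coe_mk, Pi.zero_apply, sub_eq_zero]
  rfl

def augmentationSubgroup : AddSubgroup (M →+ A) :=
  closure {x | ∃ (g : G) (ψ : M →+ A), x = ψ.comp (DistribSMul.toAddMonoidHom M g⁻¹) - ψ}

variable {G M A}

theorem fixedAddSubgroup_le_ker_of_mem_augmentationSubgroup {φ : M →+ A}
    (hφ : φ ∈ augmentationSubgroup G M A) : fixedAddSubgroup G M ≤ φ.ker := by
  induction hφ using closure_induction with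
  | mem x hx =>
    obtain ⟨g, ψ, rfl⟩ := hx
    intro m hm
    simp [AddMonoidHom.mem_ker, hm g⁻¹]
  | zero => simp
  | add x y _ _ hx hy =>
    intro m hm
    rw [AddMonoidHom.mem_ker, AddMonoidHom.add_apply, hx hm, hy hm, add_zero]
  | neg x _ hx =>
    intro m hm
    rw [AddMonoidHom.mem_ker, AddMonoidHom.neg_apply, hx hm, neg_zero]

theorem comp_coboundary₀_eq_sum [Fintype G] [DecidableEq G] (ψ : (G → M) →+ A) :
    ψ.comp (coboundary₀ G M) = ∑ g : G,
      ((ψ.comp (AddMonoidHom.single _ g)).comp (DistribSMul.toAddMonoidHom M g) -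
        ψ.comp (AddMonoidHom.single _ g)) := by
  ext m
  conv_lhs => rw [AddMonoidHom.comp_apply, ← Finset.univ_sum_single (coboundary₀ G M m)]
  simp [coboundary₀, Pi.single_sub]

theorem mem_augmentationSubgroup_of_fixedAddSubgroup_le_ker [Finite G] {φ : M →+ ℚ/ℤ}
    (hφ : fixedAddSubgroup G M ≤ φ.ker) : φ ∈ augmentationSubgroup G M ℚ/ℤ := by
  classical
  have := Fintype.ofFinite G
  obtain ⟨ψ, rfl⟩ := (coboundary₀ G M).exists_comp_eq_of_ker_le φ (ker_coboundary₀ G M ▸ hφ)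
  rw [comp_coboundary₀_eq_sum]
  exact sum_mem fun g _ => subset_closure ⟨g⁻¹, _, by rw [inv_inv]⟩

end GroupAction

theorem stmt_14_general (G : Type*) [Group G] [Finite G]
    (M : Type*) [AddCommGroup M] [DistribMulAction G M]
    (res : (M →+ ℚ ⧸ AddSubgroup.zmultiples (1 : ℚ)) →+
      (fixedAddSubgroup G M →+ ℚ ⧸ AddSubgroup.zmultiples (1 : ℚ)))
    (hres : ∀ φ, ∀ m : fixedAddSubgroup G M, res φ m = φ (m : M)) :
    Function.Surjective res ∧
    ∀ φ : M →+ ℚ ⧸ AddSubgroup.zmultiples (1 : ℚ),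
      (res φ = 0 ↔
        φ ∈ AddSubgroup.closure
          {x : M →+ ℚ ⧸ AddSubgroup.zmultiples (1 : ℚ) |
            ∃ (g : G) (ψ : M →+ ℚ ⧸ AddSubgroup.zmultiples (1 : ℚ)),
              x = ψ.comp (DistribMulAction.toAddMonoidHom M g⁻¹) - ψ}) := by
  have res_eq_zero_iff (φ : M →+ ℚ/ℤ) : res φ = 0 ↔ fixedAddSubgroup G M ≤ φ.ker := by
    simp only [DFunLike.ext_iff, hres, AddMonoidHom.zero_apply, SetLike.le_def,
      AddMonoidHom.mem_ker, Subtype.forall]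
  refine ⟨fun f => ?_, fun φ => ?_⟩
  · obtain ⟨φ, hφ⟩ := (fixedAddSubgroup G M).subtype.exists_comp_eq_of_ker_le f (by simp)
    exact ⟨φ, AddMonoidHom.ext fun m => by rw [hres, ← hφ]; rfl⟩
  · rw [res_eq_zero_iff]
    exact ⟨mem_augmentationSubgroup_of_fixedAddSubgroup_le_ker,
      fixedAddSubgroup_le_ker_of_mem_augmentationSubgroup⟩

/-- Let `G` be a finite solvable group acting on an abelian group `M`, and let
`Q = ℚ/ℤ`. The restriction map `Hom(M, Q) → Hom(M^G, Q)` is surjective, and its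
kernel is exactly the subgroup generated by the elements `g·φ − φ` (where
`(g·φ)(m) = φ(g⁻¹·m)`); i.e. the coinvariants `Hom(M, Q)_G` map isomorphically
onto `Hom(M^G, Q)`. -/
theorem stmt_14 (G : Type*) [Group G] [Finite G] [Group.IsSolvable G]
    (M : Type*) [AddCommGroup M] [DistribMulAction G M]
    (res : (M →+ ℚ ⧸ AddSubgroup.zmultiples (1 : ℚ)) →+
      (fixedAddSubgroup G M →+ ℚ ⧸ AddSubgroup.zmultiples (1 : ℚ)))
    (hres : ∀ φ, ∀ m : fixedAddSubgroup G M, res φ m = φ (m : M)) :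
    Function.Surjective res ∧
    ∀ φ : M →+ ℚ ⧸ AddSubgroup.zmultiples (1 : ℚ),
      (res φ = 0 ↔
        φ ∈ AddSubgroup.closure
          {x : M →+ ℚ ⧸ AddSubgroup.zmultiples (1 : ℚ) |
            ∃ (g : G) (ψ : M →+ ℚ ⧸ AddSubgroup.zmultiples (1 : ℚ)),
              x = ψ.comp (DistribMulAction.toAddMonoidHom M g⁻¹) - ψ}) :=
  stmt_14_general G M res hres
end

section
/- Let p be a prime with p ≡ 1 (mod 3), and let A₁, A₂, A₃ be nonzero integers with p ∤ A₁, p ∥ A₂ (p ∣ A₂ and p² ∤ A₂), p ∥ A₃, and with A₂/A₃ not a cube in ℚ_p. Let a ∈ ℚ_p satisfy a² = A₁. Then there are no w, x₁, x₂, x₃ in the ring ℤ_p of p-adic integers such that p does not divide all three of x₁, x₂, x₃, w² = A₁x₁⁶ + A₂x₂⁶ + A₃x₃⁶, w² ≠ A₁x₁⁶, and v_p(w − a·x₁³) ≡ v_p(w + a·x₁³) (mod 3). -/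
/-!
Write `A₂ = p B₂`, `A₃ = p B₃`, so that `w² - A₁ x₁⁶ = p M` with `M = B₂ x₂⁶ + B₃ x₃⁶`.
If `x₂, x₃` are not both divisible by `p`, then `p ∤ M`: otherwise `B₂ / B₃` would be `-1` times
a sixth power times a unit `≡ 1 (mod p)`, which is a cube by Hensel's lemma since `p ≠ 3`.
Dividing out common factors of `p`, `v_p(M) ≡ 0 (mod 6)`.

If `p ∣ x₁`, primitivity gives `p ∤ M`, yet `p ∣ w` makes `p² ∣ p M`. If `p ∤ x₁`, the factors
`w ∓ a x₁³` of `p M` differ by the unit `2 a x₁³`, so one of them is a unit; the congruence then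
forces `3 ∣ v_p(p M) = 1 + v_p(M)`, which is impossible.
-/

namespace PadicInt

variable {p : ℕ} [Fact p.Prime]

theorem valuation_eq_zero_of_not_dvd {x : ℤ_[p]} (h : ¬ (p : ℤ_[p]) ∣ x) :
    x.valuation = 0 := by
  have hx : x ≠ 0 := by rintro rfl; exact h (dvd_zero _)
  by_contra hv
  have := (mem_span_pow_iff_le_valuation x hx 1).2 (Nat.one_le_iff_ne_zero.2 hv)
  exact h (by simpa [Ideal.mem_span_singleton] using this)

theorem p_dvd_intCast_iff (k : ℤ) : (p : ℤ_[p]) ∣ (k : ℤ_[p]) ↔ (p : ℤ) ∣ k := by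
  simpa using pow_p_dvd_int_iff (p := p) 1 k

theorem not_dvd_mul_pow {x y : ℤ_[p]} (hx : ¬ (p : ℤ_[p]) ∣ x) (hy : ¬ (p : ℤ_[p]) ∣ y)
    (n : ℕ) : ¬ (p : ℤ_[p]) ∣ x * y ^ n := fun h =>
  (prime_p.dvd_or_dvd h).elim hx fun h => hy (prime_p.dvd_of_dvd_pow h)

open Polynomial in
theorem exists_pow_mul_eq_of_dvd_sub {n : ℕ} (hn : p.Coprime n) {s t : ℤ_[p]}
    (ht : ¬ (p : ℤ_[p]) ∣ t) (hst : (p : ℤ_[p]) ∣ s - t) : ∃ z : ℤ_[p], z ^ n * t = s := by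
  have ht1 : ‖t‖ = 1 := by
    by_contra h
    exact ht ((norm_lt_one_iff_dvd t).1 (lt_of_le_of_ne (norm_le_one t) h))
  set F : ℤ_[p][X] := C t * X ^ n - C s
  have hF : aeval (1 : ℤ_[p]) F = t - s := by simp [F]
  have hF' : aeval (1 : ℤ_[p]) (derivative F) = t * n := by simp [F, derivative_X_pow]
  have hnorm : ‖aeval (1 : ℤ_[p]) F‖ < ‖aeval (1 : ℤ_[p]) (derivative F)‖ ^ 2 := by
    rw [hF, hF', norm_mul, ht1, one_mul, norm_natCast_eq_one_iff.2 hn, one_pow, norm_sub_rev,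
      norm_lt_one_iff_dvd]
    exact hst
  obtain ⟨z, hz, -⟩ := hensels_lemma hnorm
  have hz' : aeval z F = z ^ n * t - s := by simp [F, mul_comm t]
  exact ⟨z, sub_eq_zero.1 (hz' ▸ hz)⟩

theorem exists_cube_eq_div_of_dvd_add (hp : p ≠ 3) {B₂ B₃ u₂ u₃ : ℤ_[p]}
    (hB₃ : ¬ (p : ℤ_[p]) ∣ B₃) (hu₂ : ¬ (p : ℤ_[p]) ∣ u₂) (hu₃ : ¬ (p : ℤ_[p]) ∣ u₃)
    (h : (p : ℤ_[p]) ∣ B₂ * u₂ ^ 6 + B₃ * u₃ ^ 6) :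
    ∃ y : ℚ_[p], y ^ 3 = B₂ / B₃ := by
  obtain ⟨z, hz⟩ := exists_pow_mul_eq_of_dvd_sub
    ((Nat.coprime_primes Fact.out Nat.prime_three).2 hp)
    (s := B₂ * u₂ ^ 6) (t := -(B₃ * u₃ ^ 6))
    (by rw [dvd_neg]; exact not_dvd_mul_pow hB₃ hu₃ 6) (by rwa [sub_neg_eq_add])
  have hu₂0 : (u₂ : ℚ_[p]) ≠ 0 := by
    rw [Ne, coe_eq_zero]; rintro rfl; exact hu₂ (dvd_zero _)
  have hB₃0 : (B₃ : ℚ_[p]) ≠ 0 := by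
    rw [Ne, coe_eq_zero]; rintro rfl; exact hB₃ (dvd_zero _)
  have hzQ : (z : ℚ_[p]) ^ 3 * -((B₃ : ℚ_[p]) * u₃ ^ 6) = B₂ * u₂ ^ 6 := by
    exact_mod_cast congrArg ((↑) : ℤ_[p] → ℚ_[p]) hz
  refine ⟨-(z * u₃ ^ 2 / u₂ ^ 2), ?_⟩
  field_simp
  linear_combination hzQ

theorem not_dvd_sextic_form (hp : p ≠ 3) {B₂ B₃ : ℤ_[p]} (hB₂ : ¬ (p : ℤ_[p]) ∣ B₂)
    (hB₃ : ¬ (p : ℤ_[p]) ∣ B₃) (hnc : ¬ ∃ y : ℚ_[p], y ^ 3 = B₂ / B₃) {x₂ x₃ : ℤ_[p]}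
    (hx : ¬ ((p : ℤ_[p]) ∣ x₂ ∧ (p : ℤ_[p]) ∣ x₃)) :
    ¬ (p : ℤ_[p]) ∣ B₂ * x₂ ^ 6 + B₃ * x₃ ^ 6 := by
  intro h
  by_cases hx₂ : (p : ℤ_[p]) ∣ x₂
  · have hx₃ : ¬ (p : ℤ_[p]) ∣ x₃ := fun hx₃ => hx ⟨hx₂, hx₃⟩
    exact not_dvd_mul_pow hB₃ hx₃ 6 <|
      (dvd_add_right (dvd_mul_of_dvd_right (dvd_pow hx₂ (by norm_num)) _)).1 h
  by_cases hx₃ : (p : ℤ_[p]) ∣ x₃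
  · exact not_dvd_mul_pow hB₂ hx₂ 6 <|
      (dvd_add_left (dvd_mul_of_dvd_right (dvd_pow hx₃ (by norm_num)) _)).1 h
  exact hnc (exists_cube_eq_div_of_dvd_add hp hB₃ hx₂ hx₃ h)

theorem six_dvd_valuation_sextic_form (hp : p ≠ 3) {B₂ B₃ : ℤ_[p]}
    (hB₂ : ¬ (p : ℤ_[p]) ∣ B₂) (hB₃ : ¬ (p : ℤ_[p]) ∣ B₃)
    (hnc : ¬ ∃ y : ℚ_[p], y ^ 3 = B₂ / B₃) {x₂ x₃ : ℤ_[p]}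
    (hM : B₂ * x₂ ^ 6 + B₃ * x₃ ^ 6 ≠ 0) :
    6 ∣ (B₂ * x₂ ^ 6 + B₃ * x₃ ^ 6).valuation := by
  induction hv : (B₂ * x₂ ^ 6 + B₃ * x₃ ^ 6).valuation using Nat.strong_induction_on
    generalizing x₂ x₃ with
  | _ v ih =>
  by_cases hx : (p : ℤ_[p]) ∣ x₂ ∧ (p : ℤ_[p]) ∣ x₃
  · obtain ⟨⟨y₂, rfl⟩, ⟨y₃, rfl⟩⟩ := hx
    have hfac : B₂ * (p * y₂) ^ 6 + B₃ * (p * y₃) ^ 6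
        = (p : ℤ_[p]) ^ 6 * (B₂ * y₂ ^ 6 + B₃ * y₃ ^ 6) := by ring
    rw [hfac] at hM hv
    have hM' := right_ne_zero_of_mul hM
    rw [valuation_p_pow_mul _ _ hM'] at hv
    have := ih _ (by omega) hM' rfl
    omega
  · rw [← hv, valuation_eq_zero_of_not_dvd (not_dvd_sextic_form hp hB₂ hB₃ hnc hx)]
    exact dvd_zero 6

theorem dvd_valuation_mul_of_modEq {n : ℕ} {α β : ℤ_[p]}
    (hαβ : ¬ ((p : ℤ_[p]) ∣ α ∧ (p : ℤ_[p]) ∣ β)) (h : α.valuation ≡ β.valuation [MOD n]) :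
    n ∣ (α * β).valuation := by
  rcases eq_or_ne α 0 with rfl | hα₀
  · simp
  rcases eq_or_ne β 0 with rfl | hβ₀
  · simp
  rw [valuation_mul hα₀ hβ₀]
  rcases not_and_or.1 hαβ with hα | hβ
  · rw [valuation_eq_zero_of_not_dvd hα] at h ⊢
    simpa using Nat.modEq_zero_iff_dvd.1 h.symm
  · rw [valuation_eq_zero_of_not_dvd hβ] at h ⊢
    simpa using Nat.modEq_zero_iff_dvd.1 h

theorem not_dvd_sub_and_dvd_add (hp : p ≠ 2) {w c : ℤ_[p]} (hc : ¬ (p : ℤ_[p]) ∣ c) :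
    ¬ ((p : ℤ_[p]) ∣ w - c ∧ (p : ℤ_[p]) ∣ w + c) := by
  rintro ⟨h₁, h₂⟩
  have h2 : ¬ (p : ℤ_[p]) ∣ 2 := by
    rw [← norm_lt_one_iff_dvd, ← Nat.cast_ofNat, norm_natCast_lt_one_iff]
    exact fun h => hp ((Nat.prime_dvd_prime_iff_eq Fact.out Nat.prime_two).1 h)
  exact prime_p.not_dvd_mul h2 hc (by convert dvd_sub h₂ h₁ using 1; ring)

theorem norm_le_one_of_pow_eq {a : ℚ_[p]} {x : ℤ_[p]} {n : ℕ} (hn : n ≠ 0)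
    (h : a ^ n = x) : ‖a‖ ≤ 1 :=
  (pow_le_one_iff_of_nonneg (norm_nonneg a) hn).1 (by rw [← norm_pow, h]; exact x.norm_le_one)

end PadicInt

theorem exists_eq_mul_not_dvd_of_not_sq_dvd {M : Type*} [Monoid M] {p A : M} (h : p ∣ A)
    (h2 : ¬ p ^ 2 ∣ A) : ∃ B, A = p * B ∧ ¬ p ∣ B := by
  obtain ⟨B, rfl⟩ := h
  exact ⟨B, rfl, fun hB => h2 (by rw [sq]; exact mul_dvd_mul_left p hB)⟩

theorem Prime.dvd_of_sq_sub_eq_mul {R : Type*} [CommRing R] [IsDomain R] {π w y m : R}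
    (hπ : Prime π) (hy : π ^ 2 ∣ y) (h : w ^ 2 - y = π * m) : π ∣ m := by
  have hw : π ∣ w := hπ.dvd_of_dvd_pow (n := 2) <| by
    rw [sub_eq_iff_eq_add.1 h]
    exact dvd_add (dvd_mul_right π m) ((dvd_pow_self π two_ne_zero).trans hy)
  have hππ : π * π ∣ π * m := by
    rw [← h, ← sq]
    exact dvd_sub (pow_dvd_pow_of_dvd hw 2) hy
  exact (mul_dvd_mul_iff_left hπ.ne_zero).1 hππ

open PadicInt in
theorem stmt_16_general (p : ℕ) [Fact p.Prime] (hp3 : p % 3 = 1)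
    (A₁ A₂ A₃ : ℤ)
    (hA1 : ¬ (p : ℤ) ∣ A₁)
    (hA2 : (p : ℤ) ∣ A₂ ∧ ¬ (p : ℤ) ^ 2 ∣ A₂)
    (hA3 : (p : ℤ) ∣ A₃ ∧ ¬ (p : ℤ) ^ 2 ∣ A₃)
    (hnc : ¬ ∃ y : ℚ_[p], y ^ 3 = ((A₂ : ℚ_[p]) / (A₃ : ℚ_[p])))
    (a : ℚ_[p]) (ha : a ^ 2 = (A₁ : ℚ_[p])) :
    ¬ ∃ w x₁ x₂ x₃ : ℤ_[p],
        (¬ ((p : ℤ_[p]) ∣ x₁ ∧ (p : ℤ_[p]) ∣ x₂ ∧ (p : ℤ_[p]) ∣ x₃)) ∧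
        w ^ 2 = (A₁ : ℤ_[p]) * x₁ ^ 6 + (A₂ : ℤ_[p]) * x₂ ^ 6 + (A₃ : ℤ_[p]) * x₃ ^ 6 ∧
        w ^ 2 ≠ (A₁ : ℤ_[p]) * x₁ ^ 6 ∧
        ((w : ℚ_[p]) - a * (x₁ : ℚ_[p]) ^ 3).valuation % 3
          = ((w : ℚ_[p]) + a * (x₁ : ℚ_[p]) ^ 3).valuation % 3 := by
  rintro ⟨w, x₁, x₂, x₃, hprim, heq, hne, hval⟩
  have hp : p ≠ 3 := by omega
  obtain ⟨B₂, rfl, hB₂⟩ := exists_eq_mul_not_dvd_of_not_sq_dvd hA2.1 hA2.2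
  obtain ⟨B₃, rfl, hB₃⟩ := exists_eq_mul_not_dvd_of_not_sq_dvd hA3.1 hA3.2
  rw [← p_dvd_intCast_iff] at hA1 hB₂ hB₃
  have hnc' : ¬ ∃ y : ℚ_[p], y ^ 3 = ((B₂ : ℤ_[p]) : ℚ_[p]) / ((B₃ : ℤ_[p]) : ℚ_[p]) := by
    simpa [mul_div_mul_left _ _ (NeZero.ne (p : ℚ_[p]))] using hnc
  set M := (B₂ : ℤ_[p]) * x₂ ^ 6 + (B₃ : ℤ_[p]) * x₃ ^ 6
  have hN : w ^ 2 - A₁ * x₁ ^ 6 = p * M := by rw [heq]; push_cast; ring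
  by_cases hx₁ : (p : ℤ_[p]) ∣ x₁
  · refine not_dvd_sextic_form hp hB₂ hB₃ hnc' (fun h => hprim ⟨hx₁, h⟩)
      (prime_p.dvd_of_sq_sub_eq_mul (dvd_mul_of_dvd_right ?_ _) hN)
    exact (pow_dvd_pow _ (by norm_num)).trans (pow_dvd_pow_of_dvd hx₁ 6)
  obtain ⟨b, rfl⟩ : ∃ b : ℤ_[p], (b : ℚ_[p]) = a :=
    ⟨⟨a, norm_le_one_of_pow_eq (x := A₁) two_ne_zero ha⟩, rfl⟩
  have hb : b ^ 2 = A₁ := PadicInt.ext (by push_cast; exact ha)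
  have hM : M ≠ 0 := fun h => hne (sub_eq_zero.1 (by rw [hN, h, mul_zero]))
  have hαβ : (w - b * x₁ ^ 3) * (w + b * x₁ ^ 3) = p * M := by rw [← hN, ← hb]; ring
  have hcop := not_dvd_sub_and_dvd_add (w := w) (by omega) <|
    not_dvd_mul_pow (fun h => hA1 (hb ▸ dvd_pow h two_ne_zero)) hx₁ 3
  have hmod : (w - b * x₁ ^ 3).valuation ≡ (w + b * x₁ ^ 3).valuation [MOD 3] := by
    simp only [← coe_pow, ← coe_mul, ← coe_sub, ← coe_add, valuation_coe] at hval
    unfold Nat.ModEq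
    omega
  have h3 := dvd_valuation_mul_of_modEq hcop hmod
  rw [hαβ, valuation_mul (NeZero.ne _) hM, valuation_p] at h3
  have h6 : 6 ∣ M.valuation := six_dvd_valuation_sextic_form hp hB₂ hB₃ hnc' hM
  omega

/-- Let `p ≡ 1 (mod 3)` be a prime, `A₁, A₂, A₃` nonzero integers with `p ∤ A₁`,
`p ∥ A₂`, `p ∥ A₃`, and `A₂/A₃` not a cube in `ℚ_p`, and let `a ∈ ℚ_p` with
`a² = A₁`. Then there is no primitive solution `w, x₁, x₂, x₃ ∈ ℤ_p` of
`w² = A₁x₁⁶ + A₂x₂⁶ + A₃x₃⁶` with `w² ≠ A₁x₁⁶` and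
`v_p(w − a·x₁³) ≡ v_p(w + a·x₁³) (mod 3)`. -/
theorem stmt_16 (p : ℕ) [Fact p.Prime] (hp3 : p % 3 = 1)
    (A₁ A₂ A₃ : ℤ) (h1 : A₁ ≠ 0) (h2 : A₂ ≠ 0) (h3 : A₃ ≠ 0)
    (hA1 : ¬ (p : ℤ) ∣ A₁)
    (hA2 : (p : ℤ) ∣ A₂ ∧ ¬ (p : ℤ) ^ 2 ∣ A₂)
    (hA3 : (p : ℤ) ∣ A₃ ∧ ¬ (p : ℤ) ^ 2 ∣ A₃)
    (hnc : ¬ ∃ y : ℚ_[p], y ^ 3 = ((A₂ : ℚ_[p]) / (A₃ : ℚ_[p])))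
    (a : ℚ_[p]) (ha : a ^ 2 = (A₁ : ℚ_[p])) :
    ¬ ∃ w x₁ x₂ x₃ : ℤ_[p],
        (¬ ((p : ℤ_[p]) ∣ x₁ ∧ (p : ℤ_[p]) ∣ x₂ ∧ (p : ℤ_[p]) ∣ x₃)) ∧
        w ^ 2 = (A₁ : ℤ_[p]) * x₁ ^ 6 + (A₂ : ℤ_[p]) * x₂ ^ 6 + (A₃ : ℤ_[p]) * x₃ ^ 6 ∧
        w ^ 2 ≠ (A₁ : ℤ_[p]) * x₁ ^ 6 ∧
        ((w : ℚ_[p]) - a * (x₁ : ℚ_[p]) ^ 3).valuation % 3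
          = ((w : ℚ_[p]) + a * (x₁ : ℚ_[p]) ^ 3).valuation % 3 :=
  stmt_16_general p hp3 A₁ A₂ A₃ hA1 hA2 hA3 hnc a ha
end
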